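/- arXiv:1804.00992 — 9 statements merged into one kernel-verified Lean document; each statement's English description precedes it below -/
import Mathlib

section
/- Let k ≥ 2 and 1 ≤ r ≤ k be integers, let A = {a_1, a_2, ..., a_r} be an r-element subset of {0, 1, ..., k-1}, and put n = f_k(A). Then d = k/n is an integer that divides r, say r = md for a positive integer m; moreover, A contains exactly m distinct residues modulo n, and if a'_1, a'_2, ..., a'_m ∈ A are representatives of these m residue classes modulo n, then A = {a'_i + jn : 1 ≤ i ≤ m, 0 ≤ j ≤ d-1} modulo k. -/
open Finset

/-- The set of residues of `A` modulo `k`. -/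
def resSet (k : ℕ) (A : Finset ℕ) : Finset ℕ := A.image (· % k)

/-- The set `A + t = {a + t : a ∈ A}`. -/
def shiftSet (A : Finset ℕ) (t : ℕ) : Finset ℕ := A.image (· + t)

/-- Two finite sets of naturals are equal modulo `k` if they have the same residues mod `k`. -/
def eqMod (k : ℕ) (A B : Finset ℕ) : Prop := resSet k A = resSet k B

/-- `fk k A` is the least positive `l` with `A + l` equal to `A` modulo `k`. -/
noncomputable def fk (k : ℕ) (A : Finset ℕ) : ℕ :=
  sInf {l : ℕ | 0 < l ∧ eqMod k (shiftSet A l) A}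

/-- `𝒜(j, i)`: the collection of all `j`-element subsets of `{0, 1, ..., i-1}`. -/
def Acoll (j i : ℕ) : Finset (Finset ℕ) :=
  (Finset.range i).powerset.filter (fun A => A.card = j)

open scoped Classical in
/-- `𝒜_s(j, i)`: the members `A` of `𝒜(j, i)` with `f_i(A) = s`. -/
noncomputable def Asub (s j i : ℕ) : Finset (Finset ℕ) :=
  (Acoll j i).filter (fun A => fk i A = s)

/-- The orbit of `A` under shifting modulo `k`: the residue sets of `A + j`, `0 ≤ j < k`.
Two subsets of `{0, ..., k-1}` are `k`-equivalent iff their orbits coincide. -/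
def orb (k : ℕ) (A : Finset ℕ) : Finset (Finset ℕ) :=
  (Finset.range k).image (fun j => resSet k (shiftSet A j))

/-- `|𝒫_n(r, k)|`: the number of `k`-equivalence classes of `𝒜_n(r, k)`. -/
noncomputable def numClasses (n r k : ℕ) : ℕ := ((Asub n r k).image (orb k)).card

/- ### Auxiliary lemmas -/

lemma img_mod {k : ℕ} {A : Finset ℕ} (hA : A ⊆ Finset.range k) : A.image (· % k) = A := by
  rw [Finset.image_congr (g := id), Finset.image_id]
  intro a ha
  exact Nat.mod_eq_of_lt (Finset.mem_range.mp (hA ha))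

lemma shift_comp (k a b : ℕ) (A : Finset ℕ) :
    (A.image (fun x => (x + a) % k)).image (fun x => (x + b) % k)
      = A.image (fun x => (x + (a + b)) % k) := by
  rw [Finset.image_image]
  apply Finset.image_congr
  intro x _
  simp only [Function.comp]
  rw [Nat.mod_add_mod, Nat.add_assoc]

lemma shift_add {k a b : ℕ} {A : Finset ℕ}
    (ha : A.image (fun x => (x + a) % k) = A) (hb : A.image (fun x => (x + b) % k) = A) :
    A.image (fun x => (x + (a + b)) % k) = A := by
  rw [← shift_comp, ha, hb]

lemma shift_cancel {k a b : ℕ} {A : Finset ℕ}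
    (ha : A.image (fun x => (x + a) % k) = A)
    (hab : A.image (fun x => (x + (a + b)) % k) = A) :
    A.image (fun x => (x + b) % k) = A := by
  conv_lhs => rw [← ha]
  rw [shift_comp, hab]

lemma shift_mul {k n : ℕ} {A : Finset ℕ} (hA : A ⊆ Finset.range k)
    (hn : A.image (fun x => (x + n) % k) = A) (t : ℕ) :
    A.image (fun x => (x + t * n) % k) = A := by
  induction t with
  | zero => simpa using img_mod hA
  | succ t ih =>
      have h : (t + 1) * n = t * n + n := by ring
      rw [h]
      exact shift_add ih hn

lemma resSet_shift (k t : ℕ) (A : Finset ℕ) :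
    resSet k (shiftSet A t) = A.image (fun a => (a + t) % k) := by
  unfold resSet shiftSet
  rw [Finset.image_image]
  rfl

lemma eqMod_iff {k t : ℕ} {A : Finset ℕ} (hA : A ⊆ Finset.range k) :
    eqMod k (shiftSet A t) A ↔ A.image (fun a => (a + t) % k) = A := by
  unfold eqMod
  rw [resSet_shift]
  unfold resSet
  rw [img_mod hA]

lemma orbit_ne {k n d : ℕ} (hn : 0 < n) (hd : n * d = k) {a t s : ℕ}
    (hts : t < s) (hs : s < d) : (a + t * n) % k ≠ (a + s * n) % k := by
  intro h
  have hk : 0 < k := by nlinarith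
  have hle : a + t * n ≤ a + s * n := by
    have := Nat.mul_le_mul_right n (Nat.le_of_lt hts)
    omega
  have hdvd : k ∣ (a + s * n) - (a + t * n) := (Nat.modEq_iff_dvd' hle).mp h
  have hsub : (a + s * n) - (a + t * n) = (s - t) * n := by
    have := Nat.sub_mul s t n
    have h1 : t * n ≤ s * n := Nat.mul_le_mul_right n (Nat.le_of_lt hts)
    omega
  rw [hsub] at hdvd
  have hpos : 0 < (s - t) * n := by
    have : 0 < s - t := by omega
    exact Nat.mul_pos this hn
  have hlt : (s - t) * n < k := by
    have h1 : s - t < d := by omega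
    calc (s - t) * n < d * n := (Nat.mul_lt_mul_right hn).mpr h1
    _ = k := by rw [Nat.mul_comm]; exact hd
  exact absurd (Nat.le_of_dvd hpos hdvd) (by omega)

lemma fiber_card {k n d : ℕ} {A : Finset ℕ} (hA : A ⊆ Finset.range k)
    (hn : 0 < n) (hd : n * d = k)
    (hP : A.image (fun x => (x + n) % k) = A) {a : ℕ} (ha : a ∈ A) :
    (A.filter (fun x => x % n = a % n)).card = d := by
  have hk : 0 < k := by
    have := hA ha; simp [Finset.mem_range] at this; omega
  set O := (Finset.range d).image (fun t => (a + t * n) % k) with hO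
  have hOA : O ⊆ A := by
    intro x hx
    simp only [hO, Finset.mem_image, Finset.mem_range] at hx
    obtain ⟨t, ht, rfl⟩ := hx
    have := shift_mul hA hP t
    rw [← this]
    exact Finset.mem_image_of_mem _ ha
  have hcardO : O.card = d := by
    rw [hO, Finset.card_image_of_injOn, Finset.card_range]
    intro t ht s hs hts
    simp only [Finset.coe_range, Set.mem_Iio] at ht hs
    rcases lt_trichotomy t s with h | h | h
    · exact absurd hts (orbit_ne hn hd h hs)
    · exact h
    · exact absurd hts.symm (orbit_ne hn hd h ht)
  have hndvd : n ∣ k := ⟨d, hd.symm⟩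
  have hOF : O ⊆ A.filter (fun x => x % n = a % n) := by
    intro x hx
    have hxA := hOA hx
    simp only [hO, Finset.mem_image, Finset.mem_range] at hx
    obtain ⟨t, ht, rfl⟩ := hx
    simp only [Finset.mem_filter]
    refine ⟨hxA, ?_⟩
    rw [Nat.mod_mod_of_dvd _ hndvd, Nat.add_mul_mod_self_right]
  have hFcard : (A.filter (fun x => x % n = a % n)).card ≤ d := by
    have hsub : A.filter (fun x => x % n = a % n) ⊆
        (Finset.range d).image (fun t => a % n + t * n) := by
      intro x hx
      simp only [Finset.mem_filter] at hx
      obtain ⟨hxA, hxm⟩ := hx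
      have hxk : x < k := Finset.mem_range.mp (hA hxA)
      simp only [Finset.mem_image, Finset.mem_range]
      refine ⟨x / n, ?_, ?_⟩
      · have hx2 : x < n * d := by omega
        exact Nat.div_lt_of_lt_mul hx2
      · rw [← hxm]
        exact Nat.mod_add_div' x n
    calc (A.filter (fun x => x % n = a % n)).card
        ≤ ((Finset.range d).image (fun t => a % n + t * n)).card := Finset.card_le_card hsub
      _ ≤ d := by
          calc _ ≤ (Finset.range d).card := Finset.card_image_le
          _ = d := Finset.card_range d
  have hOeq : O = A.filter (fun x => x % n = a % n) :=
    Finset.eq_of_subset_of_card_le hOF (by omega)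
  rw [← hOeq]
  exact hcardO

theorem fk_structure (k r : ℕ) (hk : 2 ≤ k) (hr1 : 1 ≤ r) (hrk : r ≤ k)
    (A : Finset ℕ) (hA : A ⊆ Finset.range k) (hcard : A.card = r)
    (n : ℕ) (hn : n = fk k A) :
    n ∣ k ∧ (k / n) ∣ r ∧
    (A.image (· % n)).card = r / (k / n) ∧
    (∀ B : Finset ℕ, B ⊆ A → B.card = r / (k / n) →
      (B.image (· % n)).card = r / (k / n) →
      eqMod k A ((B ×ˢ Finset.range (k / n)).image (fun p => p.1 + p.2 * n))) := by
  have hk0 : 0 < k := by omega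
  have hkmem : k ∈ {l : ℕ | 0 < l ∧ eqMod k (shiftSet A l) A} := by
    refine ⟨hk0, ?_⟩
    rw [eqMod_iff hA]
    have h : A.image (fun a => (a + k) % k) = A.image (· % k) := by
      apply Finset.image_congr
      intro a _
      simp [Nat.add_mod_right]
    rw [h, img_mod hA]
  have hmem : n ∈ {l : ℕ | 0 < l ∧ eqMod k (shiftSet A l) A} := by
    rw [hn]; exact Nat.sInf_mem ⟨k, hkmem⟩
  obtain ⟨hnpos, heq⟩ := hmem
  have hP : A.image (fun a => (a + n) % k) = A := (eqMod_iff hA).mp heq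
  have hInf : ∀ l ∈ {l : ℕ | 0 < l ∧ eqMod k (shiftSet A l) A}, n ≤ l := by
    intro l hl
    rw [hn]
    exact Nat.sInf_le hl
  have hnle : n ≤ k := hInf k hkmem
  -- n ∣ k
  have hndk : n ∣ k := by
    have h1 : A.image (fun x => (x + (k / n) * n) % k) = A := shift_mul hA hP _
    have h2 : A.image (fun x => (x + ((k / n) * n + k % n)) % k) = A := by
      rw [Nat.div_add_mod']
      rw [(eqMod_iff hA).mp hkmem.2]
    have h3 := shift_cancel h1 h2
    by_contra hc
    have hm0 : 0 < k % n := Nat.pos_of_ne_zero (fun h => hc (Nat.dvd_of_mod_eq_zero h))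
    have hmemS : k % n ∈ {l : ℕ | 0 < l ∧ eqMod k (shiftSet A l) A} :=
      ⟨hm0, (eqMod_iff hA).mpr h3⟩
    have h4 : n ≤ k % n := hInf _ hmemS
    have h5 : k % n < n := Nat.mod_lt k hnpos
    omega
  set d := k / n with hdd
  have hnd : n * d = k := Nat.mul_div_cancel' hndk
  have hdpos : 0 < d := Nat.div_pos hnle hnpos
  -- fiber cards and counting
  have hfib : ∀ a ∈ A, (A.filter (fun x => x % n = a % n)).card = d :=
    fun a ha => fiber_card hA hnpos hnd hP ha
  set m := (A.image (· % n)).card with hmm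
  have hr : r = m * d := by
    have hsum : A.card = ∑ c ∈ A.image (· % n), (A.filter (fun x => x % n = c)).card :=
      Finset.card_eq_sum_card_image _ _
    rw [← hcard, hsum]
    rw [Finset.sum_congr rfl (fun c hc => ?_)]
    · rw [Finset.sum_const, smul_eq_mul]
    · obtain ⟨a, ha, rfl⟩ := Finset.mem_image.mp hc
      exact hfib a ha
  have hmrd : m = r / d := by
    rw [hr, Nat.mul_div_cancel m hdpos]
  refine ⟨hndk, ⟨m, by rw [hr, Nat.mul_comm]⟩, hmrd, ?_⟩
  intro B hBA hBcard hBimg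
  have himg : B.image (· % n) = A.image (· % n) := by
    apply Finset.eq_of_subset_of_card_le (Finset.image_subset_image hBA)
    rw [hBimg, ← hmm, hmrd]
  unfold eqMod resSet
  rw [Finset.image_image, img_mod hA]
  apply Finset.Subset.antisymm
  · intro a haA
    have hak : a < k := Finset.mem_range.mp (hA haA)
    have hamem : a % n ∈ B.image (· % n) := by
      rw [himg]
      exact Finset.mem_image_of_mem _ haA
    obtain ⟨b, hbB, hbmod⟩ := Finset.mem_image.mp hamem
    have hbk : b < k := Finset.mem_range.mp (hA (hBA hbB))
    obtain ⟨j, hjd, hjeq⟩ : ∃ j, j < d ∧ (b + j * n) % k = a := by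
      rcases le_or_gt b a with hba | hab
      · have hmod : n ∣ a - b := (Nat.modEq_iff_dvd' hba).mp hbmod
        obtain ⟨j, hj⟩ := hmod
        have hcm : j * n = n * j := Nat.mul_comm j n
        refine ⟨j, ?_, ?_⟩
        · have h1 : n * j < n * d := by omega
          exact lt_of_mul_lt_mul_left h1 (Nat.zero_le n)
        · have h2 : b + j * n = a := by omega
          rw [h2, Nat.mod_eq_of_lt hak]
      · have hmod : n ∣ b - a := (Nat.modEq_iff_dvd' (le_of_lt hab)).mp hbmod.symm
        obtain ⟨j', hj'⟩ := hmod
        have hcm : j' * n = n * j' := Nat.mul_comm j' n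
        have hj'pos : 0 < j' := by
          rcases Nat.eq_zero_or_pos j' with h | h
          · subst h; omega
          · exact h
        have hj'd : j' < d := by
          have h1 : n * j' < n * d := by omega
          exact lt_of_mul_lt_mul_left h1 (Nat.zero_le n)
        refine ⟨d - j', by omega, ?_⟩
        have h2 : b + (d - j') * n = a + k := by
          have h3 : (d - j') * n = d * n - j' * n := Nat.sub_mul d j' n
          have h4 : d * n = k := by rw [Nat.mul_comm]; exact hnd
          have h5 : j' * n ≤ d * n := Nat.mul_le_mul_right n (le_of_lt hj'd)
          omega
        rw [h2, Nat.add_mod_right, Nat.mod_eq_of_lt hak]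
    rw [← hjeq]
    refine Finset.mem_image.mpr ⟨(b, j), ?_, rfl⟩
    exact Finset.mem_product.mpr ⟨hbB, Finset.mem_range.mpr hjd⟩
  · intro x hx
    obtain ⟨⟨b, j⟩, hmemp, rfl⟩ := Finset.mem_image.mp hx
    obtain ⟨hbB, hj⟩ := Finset.mem_product.mp hmemp
    have hms := shift_mul hA hP j
    show (b + j * n) % k ∈ A
    rw [← hms]
    exact Finset.mem_image_of_mem _ (hBA hbB)
end

section
/- Let n, m, d be positive integers with m ≤ n, and set k = nd and r = md. Then the number of r-element subsets A of {0, 1, ..., k-1} with f_k(A) = n is |𝒜_n(r,k)| = Σ_{s | gcd(n,m)} C(n/s, m/s) · μ(s), where the sum is over all positive divisors s of gcd(n,m), C(·,·) denotes the binomial coefficient, and μ is the Möbius function. -/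
open Finset

/-! A set `A ⊆ {0, …, k-1}` has `f_k(A) ∣ s` exactly when it is invariant under rotation by `s`
modulo `k`. For `s ∣ k` these are the preimages under reduction mod `s` of the sets
`B ⊆ {0, …, s-1}`, each of size `|B| · k/s`, so `#{A ∈ 𝒜(r, k) : f_k(A) ∣ s}` is
`C(s, r/(k/s))` when `k/s ∣ r` and `0` otherwise. Since this count is `∑_{t ∣ s} |𝒜_t(r, k)|`,
Möbius inversion at `s = n`, `k = nd`, `r = md` gives the formula. -/

def IsCyclicPeriod (k : ℕ) (A : Finset ℕ) (l : ℕ) : Prop :=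
  ∀ a < k, a ∈ A ↔ (a + l) % k ∈ A

namespace IsCyclicPeriod

variable {k l l' : ℕ} {A : Finset ℕ}

theorem add (h : IsCyclicPeriod k A l) (h' : IsCyclicPeriod k A l') :
    IsCyclicPeriod k A (l + l') := fun a ha => by
  rw [h a ha, h' _ (Nat.mod_lt _ (by omega)), Nat.mod_add_mod, add_assoc]

theorem of_add (h : IsCyclicPeriod k A l) (h' : IsCyclicPeriod k A (l + l')) :
    IsCyclicPeriod k A l' := fun a ha => by
  rw [h' a ha, h ((a + l') % k) (Nat.mod_lt _ (by omega)), Nat.mod_add_mod, add_assoc,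
    add_comm l']

theorem mul (h : IsCyclicPeriod k A l) (q : ℕ) : IsCyclicPeriod k A (q * l) := by
  induction q with
  | zero => intro a ha; rw [zero_mul, add_zero, Nat.mod_eq_of_lt ha]
  | succ q ih => rw [add_one_mul]; exact ih.add h

end IsCyclicPeriod

theorem isCyclicPeriod_self (k : ℕ) (A : Finset ℕ) : IsCyclicPeriod k A k := fun a ha => by
  rw [Nat.add_mod_right, Nat.mod_eq_of_lt ha]

theorem isCyclicPeriod_iff_mem_iff_mod_mem {k s : ℕ} {A : Finset ℕ} (hsk : s ∣ k) :
    IsCyclicPeriod k A s ↔ ∀ a < k, a ∈ A ↔ a % s ∈ A := by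
  constructor
  · intro h a ha
    have hmod : a % s < k := (Nat.mod_le a s).trans_lt ha
    rw [(h.mul (a / s)) _ hmod, Nat.mod_add_div', Nat.mod_eq_of_lt ha]
  · intro h a ha
    have hk : 0 < k := by omega
    rw [h a ha, h _ (Nat.mod_lt _ hk), Nat.mod_mod_of_dvd _ hsk, Nat.add_mod_right]

theorem resSet_eq_self {k : ℕ} {A : Finset ℕ} (hA : A ⊆ range k) : resSet k A = A := by
  conv_rhs => rw [← image_id (s := A)]
  exact image_congr fun a ha => Nat.mod_eq_of_lt (mem_range.mp (hA ha))

theorem eqMod_shiftSet_iff {k l : ℕ} {A : Finset ℕ} (hA : A ⊆ range k) :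
    eqMod k (shiftSet A l) A ↔ IsCyclicPeriod k A l := by
  have hlt : ∀ {a}, a ∈ A → a < k := fun ha => mem_range.mp (hA ha)
  have hinj : Set.InjOn (fun a => (a + l) % k) (range k) := fun a ha b hb hab => by
    have := Nat.ModEq.add_right_cancel' l hab
    rwa [Nat.ModEq, Nat.mod_eq_of_lt (mem_range.mp ha), Nat.mod_eq_of_lt (mem_range.mp hb)]
      at this
  rw [eqMod, resSet_eq_self hA, resSet, shiftSet, image_image]
  constructor
  · intro h a ha
    constructor
    · intro haA
      exact h ▸ mem_image_of_mem _ haA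
    · intro hmem
      obtain ⟨b, hb, hba⟩ := mem_image.mp (h.symm ▸ hmem)
      rwa [← hinj (hA hb) (mem_range.mpr ha) hba]
  · intro h
    refine eq_of_subset_of_card_le ?_ (card_image_of_injOn (hinj.mono hA)).ge
    intro x hx
    obtain ⟨a, ha, rfl⟩ := mem_image.mp hx
    exact (h a (hlt ha)).mp ha

theorem fk_dvd_iff {k s : ℕ} {A : Finset ℕ} (hA : A ⊆ range k) (hk : 0 < k) (hs : 0 < s) :
    fk k A ∣ s ↔ IsCyclicPeriod k A s := by
  have hfk : fk k A = sInf {l | 0 < l ∧ IsCyclicPeriod k A l} := by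
    simp only [fk, eqMod_shiftSet_iff hA]
  have ⟨hf, hper⟩ : 0 < fk k A ∧ IsCyclicPeriod k A (fk k A) :=
    hfk ▸ Nat.sInf_mem (s := {l | 0 < l ∧ IsCyclicPeriod k A l}) ⟨k, hk, isCyclicPeriod_self k A⟩
  constructor
  · rintro ⟨q, rfl⟩
    rw [mul_comm]
    exact hper.mul q
  · intro hs_per
    have hrem : IsCyclicPeriod k A (s % fk k A) :=
      (hper.mul (s / fk k A)).of_add (by rwa [Nat.div_add_mod'])
    refine Nat.dvd_of_mod_eq_zero (Nat.eq_zero_of_not_pos fun hpos => ?_)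
    have hle : fk k A ≤ s % fk k A := hfk.trans_le (Nat.sInf_le ⟨hpos, hrem⟩)
    exact (Nat.mod_lt s hf).not_ge hle

def liftMod (k s : ℕ) (B : Finset ℕ) : Finset ℕ := {x ∈ range k | x % s ∈ B}

theorem card_filter_range_mod_eq {k s b : ℕ} (hs : 0 < s) (hsk : s ∣ k) (hb : b < s) :
    #{x ∈ range k | x % s = b} = k / s := by
  have hcount := Nat.count_modEq_card (b := k) hs b
  rw [Nat.mod_eq_zero_of_dvd hsk, if_neg (Nat.not_lt_zero _), add_zero,
    Nat.count_eq_card_filter_range] at hcount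
  rw [← hcount]
  simp only [Nat.ModEq, Nat.mod_eq_of_lt hb]

theorem card_liftMod {k s : ℕ} {B : Finset ℕ} (hs : 0 < s) (hsk : s ∣ k) (hB : B ⊆ range s) :
    #(liftMod k s B) = #B * (k / s) := by
  rw [card_eq_sum_card_fiberwise (s := liftMod k s B) (t := B) (f := (· % s))
    fun x hx => (mem_filter.mp hx).2, sum_const_nat fun b hb => ?_]
  rw [liftMod, filter_filter, ← card_filter_range_mod_eq hs hsk (mem_range.mp (hB hb))]
  congr 1
  exact filter_congr fun x _ => ⟨And.right, fun h => ⟨h ▸ hb, h⟩⟩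

theorem isCyclicPeriod_liftMod {k s : ℕ} (hsk : s ∣ k) (B : Finset ℕ) :
    IsCyclicPeriod k (liftMod k s B) s := by
  rw [isCyclicPeriod_iff_mem_iff_mod_mem hsk]
  intro a ha
  simp only [liftMod, mem_filter, mem_range, Nat.mod_mod, ha, true_and, iff_and_self]
  exact fun _ => (Nat.mod_le a s).trans_lt ha

theorem liftMod_inter_range_of_isCyclicPeriod {k s : ℕ} {A : Finset ℕ} (hA : A ⊆ range k)
    (hs : 0 < s) (hsk : s ∣ k) (hper : IsCyclicPeriod k A s) : liftMod k s (A ∩ range s) = A := by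
  rw [isCyclicPeriod_iff_mem_iff_mod_mem hsk] at hper
  ext x
  simp only [liftMod, mem_filter, mem_inter, mem_range, Nat.mod_lt x hs, and_true]
  exact ⟨fun ⟨hx, hxA⟩ => (hper x hx).mpr hxA,
    fun hxA => ⟨mem_range.mp (hA hxA), (hper x (mem_range.mp (hA hxA))).mp hxA⟩⟩

theorem liftMod_inter_range_eq_self {k s : ℕ} {B : Finset ℕ} (hsk : s ≤ k) (hB : B ⊆ range s) :
    liftMod k s B ∩ range s = B := by
  ext x
  simp only [liftMod, mem_inter, mem_filter, mem_range]
  constructor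
  · rintro ⟨⟨-, hxB⟩, hxs⟩
    rwa [Nat.mod_eq_of_lt hxs] at hxB
  · intro hxB
    have hxs := mem_range.mp (hB hxB)
    exact ⟨⟨hxs.trans_le hsk, by rwa [Nat.mod_eq_of_lt hxs]⟩, hxs⟩

theorem mem_Acoll {r k : ℕ} {A : Finset ℕ} : A ∈ Acoll r k ↔ A ⊆ range k ∧ #A = r := by
  rw [Acoll, mem_filter, mem_powerset]

theorem card_filter_fk_dvd_eq {k s : ℕ} (r : ℕ) (hk : 0 < k) (hs : 0 < s) (hsk : s ∣ k) :
    #{A ∈ Acoll r k | fk k A ∣ s} = #{B ∈ (range s).powerset | #B * (k / s) = r} := by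
  refine card_nbij' (· ∩ range s) (liftMod k s) ?_ ?_ ?_ ?_
  · intro A hA
    simp only [coe_filter, mem_Acoll, mem_powerset, Set.mem_ofPred_eq] at hA ⊢
    obtain ⟨⟨hAk, rfl⟩, hdvd⟩ := hA
    refine ⟨inter_subset_right, ?_⟩
    rw [← card_liftMod hs hsk inter_subset_right,
      liftMod_inter_range_of_isCyclicPeriod hAk hs hsk ((fk_dvd_iff hAk hk hs).mp hdvd)]
  · intro B hB
    simp only [coe_filter, mem_Acoll, mem_powerset, Set.mem_ofPred_eq] at hB ⊢
    have hsub : liftMod k s B ⊆ range k := filter_subset _ _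
    exact ⟨⟨hsub, card_liftMod hs hsk hB.1 ▸ hB.2⟩,
      (fk_dvd_iff hsub hk hs).mpr (isCyclicPeriod_liftMod hsk B)⟩
  · intro A hA
    simp only [coe_filter, mem_Acoll, Set.mem_ofPred_eq] at hA
    exact liftMod_inter_range_of_isCyclicPeriod hA.1.1 hs hsk ((fk_dvd_iff hA.1.1 hk hs).mp hA.2)
  · intro B hB
    simp only [coe_filter, mem_powerset, Set.mem_ofPred_eq] at hB
    exact liftMod_inter_range_eq_self (Nat.le_of_dvd hk hsk) hB.1

theorem card_powerset_filter_card_mul_eq (s c r : ℕ) (hc : 0 < c) :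
    #{B ∈ (range s).powerset | #B * c = r} = if c ∣ r then s.choose (r / c) else 0 := by
  split_ifs with h
  · obtain ⟨q, rfl⟩ := h
    calc #{B ∈ (range s).powerset | #B * c = c * q}
        = #((range s).powersetCard q) := by
          rw [powersetCard_eq_filter]
          exact congrArg card (filter_congr fun B _ => by rw [mul_comm, Nat.mul_right_inj hc.ne'])
      _ = s.choose (c * q / c) := by
          rw [card_powersetCard, card_range, Nat.mul_div_cancel_left q hc]
  · rw [card_eq_zero, filter_eq_empty_iff]
    exact fun B _ hB => h ⟨#B, by rw [← hB, mul_comm]⟩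

theorem card_filter_fk_dvd {k s : ℕ} (r : ℕ) (hk : 0 < k) (hs : 0 < s) (hsk : s ∣ k) :
    #{A ∈ Acoll r k | fk k A ∣ s} = if k / s ∣ r then s.choose (r / (k / s)) else 0 := by
  rw [card_filter_fk_dvd_eq r hk hs hsk,
    card_powerset_filter_card_mul_eq s _ r (Nat.div_pos (Nat.le_of_dvd hk hsk) hs)]

theorem card_filter_fk_dvd_div {n m d u : ℕ} (hn : 0 < n) (hd : 0 < d) (hu : u ∣ n) :
    #{A ∈ Acoll (m * d) (n * d) | fk (n * d) A ∣ n / u}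
      = if u ∣ m then (n / u).choose (m / u) else 0 := by
  have hu0 : 0 < u := Nat.pos_of_dvd_of_pos hu hn
  have hs : 0 < n / u := Nat.div_pos (Nat.le_of_dvd hn hu) hu0
  have hquot : n * d / (n / u) = u * d := by
    have hprod : n / u * (u * d) = n * d := by rw [← mul_assoc, Nat.div_mul_cancel hu]
    rw [← hprod, Nat.mul_div_cancel_left _ hs]
  rw [card_filter_fk_dvd _ (Nat.mul_pos hn hd) hs ((Nat.div_dvd_of_dvd hu).mul_right d), hquot]
  simp only [Nat.mul_dvd_mul_iff_right hd, Nat.mul_div_mul_right m u hd]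

theorem sum_card_Asub_divisors (r k : ℕ) {s : ℕ} (hs : 0 < s) :
    ∑ t ∈ s.divisors, #(Asub t r k) = #{A ∈ Acoll r k | fk k A ∣ s} := by
  rw [card_eq_sum_card_fiberwise (f := fk k) (t := s.divisors)
    fun A hA => Nat.mem_divisors.mpr ⟨(mem_filter.mp hA).2, hs.ne'⟩]
  refine sum_congr rfl fun t ht => congrArg card ?_
  ext A
  simp only [Asub, mem_filter, and_assoc]
  exact and_congr_right fun _ => ⟨fun h => ⟨h ▸ Nat.dvd_of_mem_divisors ht, h⟩, And.right⟩

theorem card_Asub_general (n m d : ℕ) (hn : 0 < n) (hd : 0 < d) :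
    ((Asub n (m * d) (n * d)).card : ℤ) =
      ∑ s ∈ (Nat.gcd n m).divisors,
        ((n / s).choose (m / s) : ℤ) * ArithmeticFunction.moebius s := by
  have hsum : ∀ s > 0, ∑ t ∈ s.divisors, (#(Asub t (m * d) (n * d)) : ℤ)
      = #{A ∈ Acoll (m * d) (n * d) | fk (n * d) A ∣ s} := fun s hs => by
    exact_mod_cast sum_card_Asub_divisors _ _ hs
  have hinversion := ArithmeticFunction.sum_eq_iff_sum_mul_moebius_eq.mp hsum n hn
  rw [← hinversion, Nat.sum_divisorsAntidiagonal fun a b =>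
      Int.cast (ArithmeticFunction.moebius a) *
        (#{A ∈ Acoll (m * d) (n * d) | fk (n * d) A ∣ b} : ℤ),
    ← Nat.divisors_filter_dvd_of_dvd hn.ne' (Nat.gcd_dvd_left n m), sum_filter]
  refine sum_congr rfl fun u hu => ?_
  have hun := Nat.dvd_of_mem_divisors hu
  simp only [card_filter_fk_dvd_div hn hd hun, Nat.dvd_gcd_iff, hun, true_and]
  split_ifs <;> push_cast <;> ring

/-- for `k = n * d`, `r = m * d`, the number of `r`-element subsets `A` of
`{0, ..., k-1}` with `f_k(A) = n` equals `∑_{s ∣ gcd(n, m)} C(n/s, m/s) * μ(s)`. -/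
theorem card_Asub (n m d : ℕ) (hn : 0 < n) (hm : 0 < m) (hd : 0 < d) (hmn : m ≤ n) :
    ((Asub n (m * d) (n * d)).card : ℤ) =
      ∑ s ∈ (Nat.gcd n m).divisors,
        ((n / s).choose (m / s) : ℤ) * ArithmeticFunction.moebius s :=
  card_Asub_general n m d hn hd
end

section
/- Let k ≥ 2 and 1 ≤ r ≤ k be integers. Then the number of r-element subsets A of {0, 1, ..., k-1} with f_k(A) = k is |𝒜_k(r,k)| = Σ_{s | gcd(k,r)} C(k/s, r/s) · μ(s), where the sum is over all positive divisors s of gcd(k,r). -/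
open Finset

/-! Rotation `x ↦ (x + 1) % k` acts on the subsets of `{0, …, k-1}`, and `f_k(A)` is the minimal
period of `A` under it; hence `f_k(A) ∣ n` iff `A` is fixed by the rotation by `n`. When
`k = d * e`, the sets fixed by the rotation by `d` are the unions of residue classes mod `d`, each
of `e` elements, so there are `C(d, r / e)` such `r`-sets if `e ∣ r` and none otherwise. Thus
`∑_{s ∣ n} |𝒜_s(r, k)|` counts the `r`-sets fixed by the rotation by `n`, and Möbius inversion at
`n = k` gives the formula: the term of a divisor `s` of `k` vanishes unless `s ∣ r`. -/

def rotate (k l : ℕ) (A : Finset ℕ) : Finset ℕ := A.image fun x => (x + l) % k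

section Rotate

variable {k : ℕ} {A : Finset ℕ}

theorem resSet_shiftSet (k l : ℕ) (A : Finset ℕ) : resSet k (shiftSet A l) = rotate k l A := by
  simp only [resSet, shiftSet, rotate, image_image]
  rfl

theorem resSet_of_subset (hA : A ⊆ range k) : resSet k A = A := by
  conv_rhs => rw [← image_id (s := A)]
  exact image_congr fun x hx => Nat.mod_eq_of_lt (mem_range.mp (hA hx))

theorem rotate_rotate (k l m : ℕ) (A : Finset ℕ) :
    rotate k m (rotate k l A) = rotate k (l + m) A := by
  simp only [rotate, image_image]
  exact image_congr fun x _ => by simp [Nat.mod_add_mod, add_assoc]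

theorem rotate_zero (hA : A ⊆ range k) : rotate k 0 A = A := by
  simpa [rotate, resSet] using resSet_of_subset hA

theorem rotate_self (hA : A ⊆ range k) : rotate k k A = A := by
  simpa [rotate, resSet] using resSet_of_subset hA

theorem iterate_rotate_one (hA : A ⊆ range k) (n : ℕ) : (rotate k 1)^[n] A = rotate k n A := by
  induction n with
  | zero => exact (rotate_zero hA).symm
  | succ n ih => rw [Function.iterate_succ_apply', ih, rotate_rotate]

theorem isPeriodicPt_rotate_one_iff (hA : A ⊆ range k) {n : ℕ} :
    Function.IsPeriodicPt (rotate k 1) n A ↔ rotate k n A = A := by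
  rw [Function.IsPeriodicPt, Function.IsFixedPt, iterate_rotate_one hA]

theorem fk_eq_minimalPeriod (hA : A ⊆ range k) :
    fk k A = Function.minimalPeriod (rotate k 1) A := by
  simp only [Function.minimalPeriod_eq_sInf_n_pos_IsPeriodicPt, isPeriodicPt_rotate_one_iff hA,
    fk, eqMod, resSet_shiftSet, resSet_of_subset hA]

theorem fk_dvd_iff_s5 (hA : A ⊆ range k) {n : ℕ} : fk k A ∣ n ↔ rotate k n A = A := by
  rw [fk_eq_minimalPeriod hA, ← Function.isPeriodicPt_iff_minimalPeriod_dvd,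
    isPeriodicPt_rotate_one_iff hA]

theorem card_rotate {l : ℕ} (hA : A ⊆ range k) : #(rotate k l A) = #A := by
  refine card_image_of_injOn fun x hx y hy hxy => ?_
  have h : x ≡ y [MOD k] := Nat.ModEq.add_right_cancel' l hxy
  rwa [Nat.ModEq, Nat.mod_eq_of_lt (mem_range.1 (hA hx)),
    Nat.mod_eq_of_lt (mem_range.1 (hA hy))] at h

theorem rotate_mul_eq_self {d : ℕ} (hA : A ⊆ range k) (h : rotate k d A = A) (q : ℕ) :
    rotate k (d * q) A = A :=
  (isPeriodicPt_rotate_one_iff hA).1 (((isPeriodicPt_rotate_one_iff hA).2 h).mul_const q)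

theorem mem_of_modEq_of_rotate_eq_self {d x y : ℕ} (hA : A ⊆ range k) (hd : d ∣ k)
    (h : rotate k d A = A) (hx : x ∈ A) (hy : y < k) (hxy : x ≡ y [MOD d]) : y ∈ A := by
  have hxk : x < k := mem_range.1 (hA hx)
  have hyk : y ≡ y + k [MOD d] := by simpa using (Nat.modEq_zero_iff_dvd.2 hd).symm.add_left y
  obtain ⟨q, hq⟩ := (Nat.modEq_iff_dvd' (by omega)).1 (hxy.trans hyk)
  have hmem : (x + d * q) % k ∈ rotate k (d * q) A := mem_image_of_mem _ hx
  rwa [rotate_mul_eq_self hA h, ← hq, Nat.add_sub_cancel' (by omega), Nat.add_mod_right,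
    Nat.mod_eq_of_lt hy] at hmem

end Rotate

def modPreimage (k d : ℕ) (B : Finset ℕ) : Finset ℕ := (range k).filter (· % d ∈ B)

section ModPreimage

variable {d e : ℕ} {B : Finset ℕ}

theorem card_modPreimage (hB : B ⊆ range d) : #(modPreimage (d * e) d B) = e * #B := by
  rw [show e * #B = #(range e ×ˢ B) by simp]
  refine card_nbij' (fun y => (y / d, y % d)) (fun p => d * p.1 + p.2) ?_ ?_ ?_ ?_ <;>
    simp only [Set.MapsTo, Set.LeftInvOn, mem_coe, modPreimage, mem_filter, mem_range, mem_product,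
      Prod.forall, Prod.mk.injEq]
  · exact fun y ⟨hy, hyB⟩ => ⟨Nat.div_lt_of_lt_mul hy, hyB⟩
  · rintro q b ⟨hq, hbB⟩
    have hb : b < d := mem_range.1 (hB hbB)
    rw [Nat.mul_add_mod, Nat.mod_eq_of_lt hb]
    exact ⟨by nlinarith, hbB⟩
  · exact fun y _ => Nat.div_add_mod y d
  · rintro q b ⟨-, hbB⟩
    have hb : b < d := mem_range.1 (hB hbB)
    rw [Nat.mul_add_div (by omega), Nat.div_eq_of_lt hb, Nat.mul_add_mod, Nat.mod_eq_of_lt hb]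
    exact ⟨rfl, rfl⟩

theorem rotate_modPreimage :
    rotate (d * e) d (modPreimage (d * e) d B) = modPreimage (d * e) d B := by
  have hsub : modPreimage (d * e) d B ⊆ range (d * e) := filter_subset _ _
  refine eq_of_subset_of_card_le ?_ (card_rotate hsub).ge
  intro y hy
  obtain ⟨x, hx, rfl⟩ := mem_image.1 hy
  simp only [modPreimage, mem_filter, mem_range] at hx ⊢
  refine ⟨Nat.mod_lt _ (by omega), ?_⟩
  rw [Nat.mod_mod_of_dvd _ (dvd_mul_right d e), Nat.add_mod_right]
  exact hx.2

theorem filter_lt_modPreimage (he : 0 < e) (hB : B ⊆ range d) :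
    (modPreimage (d * e) d B).filter (· < d) = B := by
  ext y
  simp only [modPreimage, mem_filter, mem_range]
  constructor
  · rintro ⟨⟨-, hy⟩, hyd⟩
    rwa [Nat.mod_eq_of_lt hyd] at hy
  · intro hy
    have hyd := mem_range.1 (hB hy)
    exact ⟨⟨by nlinarith, by rwa [Nat.mod_eq_of_lt hyd]⟩, hyd⟩

end ModPreimage

theorem eq_modPreimage_of_rotate_eq_self {k d : ℕ} {A : Finset ℕ} (hA : A ⊆ range k)
    (hd : d ∣ k) (h : rotate k d A = A) : A = modPreimage k d (A.filter (· < d)) := by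
  ext y
  simp only [modPreimage, mem_filter, mem_range]
  constructor
  · intro hy
    have hyk : y < k := mem_range.1 (hA hy)
    have hyd : y % d < d := Nat.mod_lt y (Nat.pos_of_dvd_of_pos hd (by omega))
    exact ⟨hyk, mem_of_modEq_of_rotate_eq_self hA hd h hy
      (hyd.trans_le (Nat.le_of_dvd (by omega) hd)) (Nat.mod_modEq y d).symm, hyd⟩
  · rintro ⟨hyk, hy, -⟩
    exact mem_of_modEq_of_rotate_eq_self hA hd h hy hyk (Nat.mod_modEq y d)

theorem card_eq_mul_card_filter_lt {d e : ℕ} {A : Finset ℕ} (hA : A ⊆ range (d * e))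
    (h : rotate (d * e) d A = A) : #A = e * #(A.filter (· < d)) := by
  conv_lhs => rw [eq_modPreimage_of_rotate_eq_self hA (dvd_mul_right d e) h]
  exact card_modPreimage fun x hx => mem_range.2 (mem_filter.1 hx).2

theorem card_filter_rotate_eq_self {d e : ℕ} (he : 0 < e) (r : ℕ) :
    #((Acoll r (d * e)).filter fun A => rotate (d * e) d A = A) =
      if e ∣ r then d.choose (r / e) else 0 := by
  split_ifs with her
  · rw [show d.choose (r / e) = #(powersetCard (r / e) (range d)) by simp]
    refine card_nbij' (·.filter (· < d)) (modPreimage (d * e) d) ?_ ?_ ?_ ?_ <;>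
      simp only [Set.MapsTo, Set.LeftInvOn, mem_coe, mem_filter, mem_Acoll, mem_powersetCard]
    · rintro A ⟨⟨hAk, rfl⟩, h⟩
      refine ⟨fun x hx => mem_range.2 (mem_filter.1 hx).2, ?_⟩
      rw [card_eq_mul_card_filter_lt hAk h, Nat.mul_div_cancel_left _ he]
    · rintro B ⟨hBd, hB⟩
      rw [card_modPreimage hBd, hB, Nat.mul_div_cancel' her]
      exact ⟨⟨filter_subset _ _, rfl⟩, rotate_modPreimage⟩
    · rintro A ⟨⟨hAk, -⟩, h⟩
      exact (eq_modPreimage_of_rotate_eq_self hAk (dvd_mul_right d e) h).symm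
    · rintro B ⟨hBd, -⟩
      exact filter_lt_modPreimage he hBd
  · refine card_eq_zero.2 (filter_eq_empty_iff.2 fun A hA h => her ?_)
    obtain ⟨hAk, rfl⟩ := mem_Acoll.1 hA
    exact ⟨_, card_eq_mul_card_filter_lt hAk h⟩

theorem sum_card_Asub_divisors_s5 {n : ℕ} (hn : n ≠ 0) (r k : ℕ) :
    ∑ e ∈ n.divisors, #(Asub e r k) = #((Acoll r k).filter fun A => rotate k n A = A) := by
  classical
  rw [card_eq_sum_card_fiberwise (f := fk k) (t := n.divisors) fun A hA => ?_]
  · refine sum_congr rfl fun e he => ?_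
    rw [filter_filter, Asub]
    refine congrArg card (filter_congr fun A hA => ?_)
    rw [← fk_dvd_iff_s5 (mem_Acoll.1 hA).1]
    exact ⟨fun h => ⟨h ▸ Nat.dvd_of_mem_divisors he, h⟩, And.right⟩
  · obtain ⟨hA, h⟩ := mem_filter.1 hA
    exact Nat.mem_divisors.2 ⟨(fk_dvd_iff_s5 (mem_Acoll.1 hA).1).2 h, hn⟩

theorem Nat.divisors_gcd {k r : ℕ} (hk : k ≠ 0) :
    (Nat.gcd k r).divisors = k.divisors.filter (· ∣ r) := by
  ext d
  simp only [Nat.mem_divisors, mem_filter, Nat.dvd_gcd_iff, ne_eq, Nat.gcd_eq_zero_iff, hk,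
    false_and, not_false_eq_true, and_true]

theorem card_Asub_max_general (k r : ℕ) (hk : 2 ≤ k) :
    ((Asub k r k).card : ℤ) =
      ∑ s ∈ (Nat.gcd k r).divisors,
        ((k / s).choose (r / s) : ℤ) * ArithmeticFunction.moebius s := by
  have inversion := ArithmeticFunction.sum_eq_iff_sum_mul_moebius_eq
    (f := fun e => (#(Asub e r k) : ℤ))
    (g := fun n => (#((Acoll r k).filter fun A => rotate k n A = A) : ℤ)) |>.1
    (fun n hn => by exact_mod_cast sum_card_Asub_divisors_s5 hn.ne' r k) k (by omega)
  simp only [Int.cast_id] at inversion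
  rw [← inversion, Nat.sum_divisorsAntidiagonal fun a b =>
    (ArithmeticFunction.moebius a : ℤ) * #((Acoll r k).filter fun A => rotate k b A = A),
    Nat.divisors_gcd (by omega), sum_filter]
  refine sum_congr rfl fun e he => ?_
  have hek := Nat.dvd_of_mem_divisors he
  have hcount := card_filter_rotate_eq_self (d := k / e) (Nat.pos_of_mem_divisors he) r
  rw [Nat.div_mul_cancel hek] at hcount
  rw [hcount]
  split_ifs <;> simp [mul_comm]

/-- the number of `r`-element subsets `A` of `{0, ..., k-1}` with `f_k(A) = k`
equals `∑_{s ∣ gcd(k, r)} C(k/s, r/s) * μ(s)`. -/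
theorem card_Asub_max (k r : ℕ) (hk : 2 ≤ k) (hr1 : 1 ≤ r) (hrk : r ≤ k) :
    ((Asub k r k).card : ℤ) =
      ∑ s ∈ (Nat.gcd k r).divisors,
        ((k / s).choose (r / s) : ℤ) * ArithmeticFunction.moebius s :=
  card_Asub_max_general k r hk
end

section
/- Let k ≥ 2 and 1 ≤ r ≤ k be integers. Then Σ_{s | gcd(k,r)} C(k/s, r/s) · μ(s) ≡ 0 (mod k), where the sum is over all positive divisors s of gcd(k,r), C(·,·) denotes the binomial coefficient, and μ is the Möbius function. -/
/-!
Let `ZMod k` act on its subsets by translation. For `e ∣ gcd(k, r)`, the `r`-subsets whose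
stabilizer has order divisible by `e` are the preimages of the `r/e`-subsets of `ZMod (k/e)`, so
there are `C(k/e, r/e)` of them. The order of the stabilizer of an `r`-subset divides `gcd(k, r)`,
so Möbius inversion turns the sum into the number of `r`-subsets with trivial stabilizer, and these
fall into free orbits of size `k`.
-/

open Finset Pointwise AddAction ArithmeticFunction
open scoped ArithmeticFunction.Moebius

namespace MulAction

variable {G X : Type*} [Group G] [MulAction G X] [Finite G]

@[to_additive]
theorem card_dvd_card_of_stabilizer_eq_bot [Finite X] (h : ∀ x : X, stabilizer G x = ⊥) :
    Nat.card G ∣ Nat.card X := by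
  have := Fintype.ofFinite (orbitRel.Quotient G X)
  rw [Nat.card_congr (selfEquivSigmaOrbitsQuotientStabilizer G X), Nat.card_sigma]
  exact dvd_sum fun ω _ => by rw [← Subgroup.index, h, Subgroup.index_bot]

@[to_additive]
theorem card_dvd_card_finset_of_stabilizer_eq_bot {s : Finset X}
    (hs : ∀ g : G, ∀ x ∈ s, g • x ∈ s) (h : ∀ x ∈ s, stabilizer G x = ⊥) :
    Nat.card G ∣ #s := by
  let p : SubMulAction G X := ⟨s, fun g x hx => hs g x hx⟩
  have : Finite p := inferInstanceAs (Finite (s : Set X))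
  have := card_dvd_card_of_stabilizer_eq_bot (G := G) (X := p) fun x => by
    rw [SubMulAction.stabilizer_of_subMul]
    exact h x x.2
  rwa [← Nat.card_eq_finsetCard]

end MulAction

@[to_additive]
theorem IsCyclic.le_iff_card_dvd_card {G : Type*} [Group G] [IsCyclic G] [Finite G]
    {H K : Subgroup G} : K ≤ H ↔ Nat.card K ∣ Nat.card H := by
  classical
  have := Fintype.ofFinite G
  refine ⟨Subgroup.card_dvd_of_le, fun hdvd x hx => ?_⟩
  have pow_card_eq_one {L : Subgroup G} {a : G} (ha : a ∈ L) : a ^ Nat.card L = 1 := by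
    rw [← orderOf_dvd_iff_pow_eq_one, ← Subgroup.orderOf_mk a ha]
    exact orderOf_dvd_natCard _
  -- `H` lies in the solution set of `a ^ |H| = 1`, which a cyclic group bounds by `|H|`.
  have hH : univ.filter (· ∈ H) = univ.filter (fun a : G => a ^ Nat.card H = 1) := by
    refine eq_of_subset_of_card_le (fun a ha => ?_) ?_
    · simp only [mem_filter, mem_univ, true_and] at ha ⊢
      exact pow_card_eq_one ha
    · refine (IsCyclic.card_pow_eq_one_le (Nat.card_pos (α := H))).trans_eq ?_
      rw [← Fintype.card_subtype, Nat.card_eq_fintype_card]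
  have hxH : x ^ Nat.card H = 1 := by
    obtain ⟨m, hm⟩ := hdvd
    rw [hm, pow_mul, pow_card_eq_one hx, one_pow]
  have hx' : x ∈ univ.filter (fun a : G => a ^ Nat.card H = 1) := by simpa using hxH
  rw [← hH] at hx'
  exact (mem_filter.1 hx').2

namespace AddMonoidHom

variable {G Q : Type*} [AddGroup G] [Fintype G] [AddGroup Q] [DecidableEq Q]
  {f : G →+ Q}

theorem card_filter_apply_mem_of_surjective (hf : Function.Surjective f) (B : Finset Q) :
    #{x | f x ∈ B} = Nat.card f.ker * #B := by
  rw [card_eq_sum_card_fiberwise (f := f) (s := univ.filter fun x => f x ∈ B) (t := B)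
    fun x hx => (mem_filter.1 hx).2, mul_comm, ← smul_eq_mul, ← sum_const]
  refine sum_congr rfl fun q hq => ?_
  rw [filter_filter, filter_congr fun a _ => ⟨And.right, fun h => ⟨h ▸ hq, h⟩⟩]
  rw [card_fiber_eq_of_mem_range f (hf q) ⟨0, map_zero f⟩, Nat.card_eq_fintype_card,
    Fintype.card_subtype]
  simp [mem_ker]

theorem filter_apply_mem_image_eq_self [DecidableEq G] {A : Finset G}
    (hA : f.ker ≤ stabilizer G A) :
    ({x | f x ∈ A.image f} : Finset G) = A := by
  ext x
  simp only [mem_filter, mem_univ, true_and, mem_image]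
  refine ⟨fun ⟨a, ha, hax⟩ => ?_, fun hx => ⟨x, hx, rfl⟩⟩
  have hker : x - a ∈ f.ker := by simp [mem_ker, hax]
  simpa using mem_stabilizer_finset'.1 (hA hker) ha

theorem card_eq_card_ker_mul_card_image [DecidableEq G] (hf : Function.Surjective f)
    {A : Finset G} (hA : f.ker ≤ stabilizer G A) : #A = Nat.card f.ker * #(A.image f) := by
  rw [← card_filter_apply_mem_of_surjective hf, filter_apply_mem_image_eq_self hA]

open scoped Classical in
theorem card_filter_card_eq_and_ker_le_stabilizer [DecidableEq G] [Fintype Q]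
    (hf : Function.Surjective f) (n : ℕ) :
    #{A : Finset G | #A = Nat.card f.ker * n ∧ f.ker ≤ stabilizer G A} =
      (Fintype.card Q).choose n := by
  have hker : 0 < Nat.card f.ker := Nat.card_pos
  rw [← card_univ, ← card_powersetCard]
  refine card_nbij' (fun A => A.image f) (fun B => univ.filter (f · ∈ B)) ?_ ?_ ?_ ?_
  · intro A hA
    simp only [coe_filter, Set.mem_ofPred_eq, mem_univ, true_and] at hA
    rw [mem_coe, mem_powersetCard]
    refine ⟨subset_univ _, Nat.eq_of_mul_eq_mul_left hker ?_⟩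
    rw [← card_eq_card_ker_mul_card_image hf hA.2, hA.1]
  · intro B hB
    rw [mem_coe, mem_powersetCard] at hB
    simp only [coe_filter, Set.mem_ofPred_eq, mem_univ, true_and]
    refine ⟨by rw [card_filter_apply_mem_of_surjective hf, hB.2], fun h hh => ?_⟩
    rw [mem_stabilizer_finset']
    intro x hx
    simpa [mem_ker.1 hh] using hx
  · intro A hA
    exact filter_apply_mem_image_eq_self (mem_filter.1 hA).2.2
  · intro B _
    ext q
    obtain ⟨x, rfl⟩ := hf q
    simp only [mem_image, mem_filter, mem_univ, true_and]
    exact ⟨fun ⟨a, ha, hax⟩ => hax ▸ ha, fun h => ⟨x, h, rfl⟩⟩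

end AddMonoidHom

theorem AddAction.card_stabilizer_dvd_card {G : Type*} [AddCommGroup G] [Finite G]
    [DecidableEq G] (A : Finset G) : Nat.card (stabilizer G A) ∣ #A := by
  classical
  have := Fintype.ofFinite G
  have hA := AddMonoidHom.card_eq_card_ker_mul_card_image
    (QuotientAddGroup.mk'_surjective (stabilizer G A)) (QuotientAddGroup.ker_mk' _).le
  rw [QuotientAddGroup.ker_mk'] at hA
  exact Dvd.intro _ hA.symm

theorem AddAction.card_dvd_card_filter_card_stabilizer_eq_one {G : Type*} [AddCommGroup G]
    [Fintype G] [DecidableEq G] (r : ℕ) :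
    Nat.card G ∣ #{A : Finset G | #A = r ∧ Nat.card (stabilizer G A) = 1} :=
  card_dvd_card_finset_of_stabilizer_eq_bot
    (fun g A hA => by simpa only [mem_filter, mem_univ, true_and, card_vadd_finset,
      stabilizer_vadd_eq_right] using hA)
    fun A hA => AddSubgroup.card_eq_one.1 (mem_filter.1 hA).2.2

namespace ZMod

variable {k e : ℕ} [NeZero k]

theorem card_ker_castHom (he : e ∣ k) :
    Nat.card (castHom (Nat.div_dvd_of_dvd he) (ZMod (k / e))).toAddMonoidHom.ker = e := by
  set f := (castHom (Nat.div_dvd_of_dvd he) (ZMod (k / e))).toAddMonoidHom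
  have hk := AddSubgroup.card_mul_index f.ker
  rw [AddSubgroup.index_ker,
    f.range_eq_top_of_surjective (castHom_surjective (Nat.div_dvd_of_dvd he)), AddSubgroup.card_top,
    Nat.card_zmod, Nat.card_zmod] at hk
  have hpos : 0 < k / e := Nat.div_pos (Nat.le_of_dvd (NeZero.pos k) he)
    (Nat.pos_of_dvd_of_pos he (NeZero.pos k))
  exact Nat.eq_of_mul_eq_mul_right hpos (hk.trans (Nat.mul_div_cancel' he).symm)

theorem card_filter_dvd_card_stabilizer {r : ℕ} (hek : e ∣ k) (her : e ∣ r) :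
    #{A : Finset (ZMod k) | #A = r ∧ e ∣ Nat.card (stabilizer (ZMod k) A)} =
      (k / e).choose (r / e) := by
  set f := (castHom (Nat.div_dvd_of_dvd hek) (ZMod (k / e))).toAddMonoidHom
  have : NeZero (k / e) := ⟨(Nat.div_pos (Nat.le_of_dvd (NeZero.pos k) hek)
    (Nat.pos_of_dvd_of_pos hek (NeZero.pos k))).ne'⟩
  rw [← ZMod.card (k / e), ← f.card_filter_card_eq_and_ker_le_stabilizer
    (castHom_surjective (Nat.div_dvd_of_dvd hek)) (r / e),
    card_ker_castHom hek, Nat.mul_div_cancel' her]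
  congr 1
  ext A
  simp only [mem_filter, mem_univ, true_and, IsAddCyclic.le_iff_card_dvd_card, f,
    card_ker_castHom hek]

end ZMod

theorem ArithmeticFunction.sum_moebius_filter_dvd {g s : ℕ} (hg : g ≠ 0) (hs : s ∣ g) :
    ∑ e ∈ g.divisors with e ∣ s, (moebius e : ℤ) = if s = 1 then 1 else 0 := by
  rw [Nat.divisors_filter_dvd_of_dvd hg hs, ← coe_mul_zeta_apply, moebius_mul_coe_zeta, one_apply]

theorem sum_choose_moebius_cong_general (k r : ℕ) (hk : 2 ≤ k) :
    (k : ℤ) ∣ ∑ s ∈ (Nat.gcd k r).divisors,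
      ((k / s).choose (r / s) : ℤ) * ArithmeticFunction.moebius s := by
  have : NeZero k := ⟨by omega⟩
  have hg : k.gcd r ≠ 0 := Nat.gcd_ne_zero_left (NeZero.ne k)
  let stabCard (A : Finset (ZMod k)) := Nat.card (stabilizer (ZMod k) A)
  have stabCard_dvd_gcd (A : Finset (ZMod k)) (hA : #A = r) : stabCard A ∣ k.gcd r :=
    Nat.dvd_gcd (Nat.card_zmod k ▸ AddSubgroup.card_addSubgroup_dvd_card _)
      (hA ▸ card_stabilizer_dvd_card A)
  suffices h : ∑ e ∈ (k.gcd r).divisors, ((k / e).choose (r / e) : ℤ) * μ e =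
      #{A | #A = r ∧ stabCard A = 1} by
    rw [h]
    exact_mod_cast Nat.card_zmod k ▸ card_dvd_card_filter_card_stabilizer_eq_one (G := ZMod k) r
  calc ∑ e ∈ (k.gcd r).divisors, ((k / e).choose (r / e) : ℤ) * μ e
      = ∑ e ∈ (k.gcd r).divisors, ∑ A with #A = r, if e ∣ stabCard A then μ e else 0 := by
        refine sum_congr rfl fun e he => ?_
        have heg := Nat.dvd_of_mem_divisors he
        rw [← sum_filter, sum_const, filter_filter, nsmul_eq_mul,
          ZMod.card_filter_dvd_card_stabilizer (heg.trans (k.gcd_dvd_left r))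
            (heg.trans (k.gcd_dvd_right r))]
    _ = ∑ A with #A = r, ∑ e ∈ (k.gcd r).divisors, if e ∣ stabCard A then μ e else 0 :=
        sum_comm
    _ = ∑ A with #A = r, if stabCard A = 1 then 1 else 0 := by
        refine sum_congr rfl fun A hA => ?_
        rw [← sum_filter, sum_moebius_filter_dvd hg (stabCard_dvd_gcd A (mem_filter.1 hA).2)]
    _ = #{A | #A = r ∧ stabCard A = 1} := by rw [sum_boole, filter_filter]

/-- `∑_{s ∣ gcd(k, r)} C(k/s, r/s) · μ(s) ≡ 0 (mod k)`. -/
theorem sum_choose_moebius_cong (k r : ℕ) (hk : 2 ≤ k) (hr1 : 1 ≤ r) (hrk : r ≤ k) :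
    (k : ℤ) ∣ ∑ s ∈ (Nat.gcd k r).divisors,
      ((k / s).choose (r / s) : ℤ) * ArithmeticFunction.moebius s :=
  sum_choose_moebius_cong_general k r hk
end

section
/- Let k ≥ 2 and 1 ≤ r ≤ k be integers. Then Σ_{s | gcd(k,r)} C(k/s, r/s) · φ(s) ≡ 0 (mod k), where the sum is over all positive divisors s of gcd(k,r), C(·,·) denotes the binomial coefficient, and φ is Euler's totient function. -/
open Finset AddAction

namespace SCT

variable {k r : ℕ}

abbrev X (k r : ℕ) := {A : Finset (ZMod k) // A.card = r}

instance : AddAction (ZMod k) (X k r) where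
  vadd g A := ⟨A.1.image (· + g), by
    rw [Finset.card_image_of_injective _ (add_left_injective g), A.2]⟩
  zero_vadd A := by
    apply Subtype.ext
    show Finset.image (· + 0) A.1 = A.1
    simp
  add_vadd g h A := by
    apply Subtype.ext
    show Finset.image (· + (g + h)) A.1 = Finset.image (· + g) (Finset.image (· + h) A.1)
    rw [Finset.image_image]
    congr 1
    ext x
    simp [add_assoc, add_comm g h]

lemma vadd_coe (g : ZMod k) (A : X k r) :
    ((g +ᵥ A : X k r) : Finset (ZMod k)) = A.1.image (· + g) := rfl

variable [NeZero k]

lemma card_fixedBy_eq (g : ZMod k) (r : ℕ) :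
    Nat.card (fixedBy (X k r) g) =
      if addOrderOf g ∣ r then (k / addOrderOf g).choose (r / addOrderOf g) else 0 := by
  classical
  obtain ⟨m, hmdef⟩ : ∃ m, addOrderOf g = m := ⟨_, rfl⟩
  rw [hmdef]
  have hmk : m ∣ k := by
    rw [← hmdef]
    simpa [ZMod.card] using addOrderOf_dvd_card (x := g)
  have hm0 : 0 < m := hmdef ▸ addOrderOf_pos g
  obtain ⟨d, hkdm⟩ : ∃ d, k = d * m := ⟨k / m, (Nat.div_mul_cancel hmk).symm⟩
  have hddef : k / m = d := by rw [hkdm, Nat.mul_div_cancel _ hm0]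
  rw [hddef]
  have hdk : d ∣ k := ⟨m, hkdm⟩
  haveI : NeZero d := ⟨by
    intro h
    exact (NeZero.ne k) (by rw [hkdm, h, zero_mul])⟩
  set π : ZMod k →+* ZMod d := ZMod.castHom hdk (ZMod d) with hπdef
  set fib : ZMod d → Finset (ZMod k) := fun b => univ.filter (fun x => π x = b) with hfibdef
  have hπsurj : ∀ b : ZMod d, π ((b.val : ℕ) : ZMod k) = b := fun b => by
    rw [map_natCast, ZMod.natCast_zmod_val]
  -- all fibers have the same cardinality
  have hfibcard : ∀ b : ZMod d, (fib b).card = (fib 0).card := by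
    intro b
    apply Finset.card_bij (fun x _ => x - ((b.val : ℕ) : ZMod k))
    · intro x hx
      simp only [hfibdef, mem_filter, mem_univ, true_and] at hx ⊢
      rw [map_sub, hx, hπsurj, sub_self]
    · intro x hx y hy hxy
      exact sub_left_injective hxy
    · intro y hy
      simp only [hfibdef, mem_filter, mem_univ, true_and] at hy ⊢
      exact ⟨y + ((b.val : ℕ) : ZMod k), by rw [map_add, hy, hπsurj, zero_add], by
        rw [add_sub_cancel_right]⟩
  have hfibm : ∀ b : ZMod d, (fib b).card = m := by
    have hsum : ∑ b : ZMod d, (fib b).card = k := by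
      rw [hfibdef]
      rw [sum_card_fiberwise_eq_card_filter]
      simp [ZMod.card]
    rw [Finset.sum_congr rfl (fun b _ => hfibcard b)] at hsum
    rw [Finset.sum_const, smul_eq_mul, Finset.card_univ, ZMod.card] at hsum
    have : d * (fib 0).card = d * m := by rw [hsum, hkdm, mul_comm]
    have h0 : (fib 0).card = m := Nat.eq_of_mul_eq_mul_left (Nat.pos_of_ne_zero (NeZero.ne d)) this
    intro b; rw [hfibcard b, h0]
  -- d divides g.val, hence π g = 0
  have hdg : d ∣ g.val := by
    have h1 : ((m * g.val : ℕ) : ZMod k) = 0 := by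
      push_cast
      rw [ZMod.natCast_zmod_val, ← nsmul_eq_mul, ← hmdef]
      exact addOrderOf_nsmul_eq_zero g
    have h2 : k ∣ m * g.val := (ZMod.natCast_eq_zero_iff _ _).mp h1
    obtain ⟨v, hv⟩ : ∃ v, g.val = v := ⟨_, rfl⟩
    rw [hv] at h2 ⊢
    rw [hkdm, mul_comm m v] at h2
    exact Nat.dvd_of_mul_dvd_mul_right hm0 h2
  have hπg : π g = 0 := by
    conv_lhs => rw [← ZMod.natCast_zmod_val g]
    rw [map_natCast]
    exact (ZMod.natCast_eq_zero_iff _ _).mpr hdg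
  -- the kernel fiber is exactly the multiples of g
  have hker : ∀ x : ZMod k, π x = 0 → ∃ n : ℕ, x = n • g := by
    set Zg : Finset (ZMod k) := univ.filter (fun x => x ∈ AddSubgroup.zmultiples g) with hZgdef
    have hZsub : Zg ⊆ fib 0 := by
      intro x hx
      rw [hZgdef, mem_filter] at hx
      obtain ⟨z, hz⟩ := AddSubgroup.mem_zmultiples_iff.mp hx.2
      simp only [hfibdef, mem_filter, mem_univ, true_and]
      rw [← hz, map_zsmul, hπg, smul_zero]
    have hZcard : Zg.card = m := by
      rw [hZgdef, ← Fintype.card_subtype, ← Nat.card_eq_fintype_card, ← hmdef]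
      exact Nat.card_zmultiples g
    have hZeq : Zg = fib 0 :=
      Finset.eq_of_subset_of_card_le hZsub (by rw [hfibm, hZcard])
    intro x hx
    have hx' : x ∈ Zg := by
      rw [hZeq]
      simp only [hfibdef, mem_filter, mem_univ, true_and]
      exact hx
    rw [hZgdef, mem_filter] at hx'
    obtain ⟨z, hz⟩ := AddSubgroup.mem_zmultiples_iff.mp hx'.2
    refine ⟨((z : ZMod k)).val, ?_⟩
    rw [← hz, nsmul_eq_mul, zsmul_eq_mul, ZMod.natCast_zmod_val]
  -- saturation of fixed sets
  have hsat : ∀ A : Finset (ZMod k), A.image (· + g) = A →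
      ∀ x y : ZMod k, π x = π y → (x ∈ A ↔ y ∈ A) := by
    intro A hA
    have hstep : ∀ x : ZMod k, x + g ∈ A ↔ x ∈ A := by
      intro x
      conv_lhs => rw [← hA]
      simp only [Finset.mem_image]
      constructor
      · rintro ⟨a, ha, h⟩
        rwa [add_left_injective g h] at ha
      · intro hx; exact ⟨x, hx, rfl⟩
    have hn : ∀ (n : ℕ) (x : ZMod k), x + n • g ∈ A ↔ x ∈ A := by
      intro n
      induction n with
      | zero => simp
      | succ n ih =>
        intro x
        rw [succ_nsmul, ← add_assoc, hstep (x + n • g), ih x]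
    intro x y hxy
    have h0 : π (y - x) = 0 := by rw [map_sub, hxy, sub_self]
    obtain ⟨n, hn'⟩ := hker _ h0
    have hyx : y = x + n • g := by rw [← hn', add_sub_cancel]
    rw [hyx, hn n x]
  -- counting preimages
  have hfill : ∀ B : Finset (ZMod d), (univ.filter (fun x => π x ∈ B)).card = m * B.card := by
    intro B
    rw [← sum_card_fiberwise_eq_card_filter]
    rw [Finset.sum_const_nat (fun b _ => hfibm b), mul_comm]
  have hAeq : ∀ A : Finset (ZMod k), A.image (· + g) = A →
      A = univ.filter (fun x => π x ∈ A.image π) := by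
    intro A hA
    ext x
    simp only [mem_filter, mem_univ, true_and, Finset.mem_image]
    constructor
    · intro hx; exact ⟨x, hx, rfl⟩
    · rintro ⟨a, ha, h⟩
      exact (hsat A hA a x h).mp ha
  by_cases hmr : m ∣ r
  · rw [if_pos hmr]
    have hcard_img : ∀ A : Finset (ZMod k), A.image (· + g) = A → A.card = r →
        (A.image π).card = r / m := by
      intro A h1 hc
      have h2 : r = m * (A.image π).card := by
        rw [← hc]
        conv_lhs => rw [hAeq A h1]
        exact hfill _
      rw [h2, Nat.mul_div_cancel_left _ hm0]
    have hfix_filter : ∀ B : Finset (ZMod d),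
        (univ.filter (fun x => π x ∈ B)).image (· + g) = univ.filter (fun x => π x ∈ B) := by
      intro B
      have hsub : (univ.filter (fun x => π x ∈ B)).image (· + g) ⊆
          univ.filter (fun x => π x ∈ B) := by
        intro y hy
        obtain ⟨x, hx, rfl⟩ := Finset.mem_image.mp hy
        simp only [mem_filter, mem_univ, true_and] at hx ⊢
        rwa [map_add, hπg, add_zero]
      exact Finset.eq_of_subset_of_card_le hsub
        (le_of_eq (Finset.card_image_of_injective _ (add_left_injective g)).symm)
    have e : fixedBy (X k r) g ≃ {B : Finset (ZMod d) // B.card = r / m} :=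
      { toFun := fun A => ⟨A.1.1.image π,
          hcard_img A.1.1 (congrArg Subtype.val (mem_fixedBy.mp A.2)) A.1.2⟩
        invFun := fun B => ⟨⟨univ.filter (fun x => π x ∈ B.1), by
            rw [hfill, B.2, Nat.mul_div_cancel' hmr]⟩,
          mem_fixedBy.mpr (Subtype.ext (hfix_filter B.1))⟩
        left_inv := fun A => Subtype.ext (Subtype.ext
          (hAeq A.1.1 (congrArg Subtype.val (mem_fixedBy.mp A.2))).symm)
        right_inv := fun B => Subtype.ext (by
          ext b
          simp only [Finset.mem_image, mem_filter, mem_univ, true_and]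
          constructor
          · rintro ⟨x, hx, rfl⟩; exact hx
          · intro hb
            exact ⟨((b.val : ℕ) : ZMod k), by rw [hπsurj]; exact hb, hπsurj b⟩) }
    rw [Nat.card_congr e, Nat.card_eq_fintype_card, Fintype.card_finset_len, ZMod.card]
  · rw [if_neg hmr]
    rw [Nat.card_eq_zero]
    left
    constructor
    rintro ⟨⟨A, hcard⟩, hfix⟩
    have h1 : A.image (· + g) = A := congrArg Subtype.val (mem_fixedBy.mp hfix)
    apply hmr
    refine ⟨(A.image π).card, ?_⟩
    rw [← hcard]
    conv_lhs => rw [hAeq A h1]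
    exact hfill _


lemma burnside (k r : ℕ) [NeZero k] :
    k ∣ ∑ g : ZMod k, Nat.card (fixedBy (X k r) g) := by
  classical
  haveI F1 : ∀ a : ZMod k, Fintype (fixedBy (X k r) a) := fun a => Fintype.ofFinite _
  haveI F2 : Fintype (Quotient (AddAction.orbitRel (ZMod k) (X k r))) := Fintype.ofFinite _
  have h := AddAction.sum_card_fixedBy_eq_card_orbits_mul_card_addGroup (ZMod k) (X k r)
  have h2 : ∑ g : ZMod k, Nat.card (fixedBy (X k r) g) =
      Fintype.card (Quotient (AddAction.orbitRel (ZMod k) (X k r))) * k := by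
    rw [Finset.sum_congr rfl (fun g _ => (Nat.card_eq_fintype_card
      (α := fixedBy (X k r) g))), h, ZMod.card]
  rw [h2]
  exact Dvd.intro _ (mul_comm _ _)

end SCT

/-- `∑_{s ∣ gcd(k, r)} C(k/s, r/s) · φ(s) ≡ 0 (mod k)`. -/
theorem sum_choose_totient_cong (k r : ℕ) (hk : 2 ≤ k) (hr1 : 1 ≤ r) (hrk : r ≤ k) :
    k ∣ ∑ s ∈ (Nat.gcd k r).divisors, (k / s).choose (r / s) * s.totient := by
  classical
  haveI : NeZero k := ⟨by omega⟩
  have hb := SCT.burnside k r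
  have hsum : ∑ g : ZMod k, Nat.card (AddAction.fixedBy (SCT.X k r) g) =
      ∑ s ∈ (Nat.gcd k r).divisors, (k / s).choose (r / s) * s.totient := by
    rw [Finset.sum_congr rfl (fun g _ => SCT.card_fixedBy_eq g r)]
    have hmaps : ∀ g : ZMod k, g ∈ Finset.univ → addOrderOf g ∈ k.divisors := by
      intro g _
      rw [Nat.mem_divisors]
      refine ⟨?_, NeZero.ne k⟩
      simpa [ZMod.card] using addOrderOf_dvd_card (x := g)
    rw [← Finset.sum_fiberwise_of_maps_to' hmaps
      (fun m => if m ∣ r then (k / m).choose (r / m) else 0)]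
    have hcardfib : ∀ m ∈ k.divisors,
        (Finset.univ.filter (fun g : ZMod k => addOrderOf g = m)).card = m.totient := by
      intro m hm
      have hd : m ∣ Fintype.card (ZMod k) := by
        rw [ZMod.card]; exact (Nat.mem_divisors.mp hm).1
      exact IsAddCyclic.card_addOrderOf_eq_totient hd
    have hstep : ∀ m ∈ k.divisors,
        (∑ _g ∈ Finset.univ.filter (fun g : ZMod k => addOrderOf g = m),
          if m ∣ r then (k / m).choose (r / m) else 0) =
        m.totient * (if m ∣ r then (k / m).choose (r / m) else 0) := by
      intro m hm
      rw [Finset.sum_const_nat (fun _ _ => rfl), hcardfib m hm]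
    rw [Finset.sum_congr rfl hstep]
    have hfilter : k.divisors.filter (· ∣ r) = (Nat.gcd k r).divisors := by
      ext m
      rw [Finset.mem_filter, Nat.mem_divisors, Nat.mem_divisors]
      constructor
      · rintro ⟨⟨h1, h2⟩, h3⟩
        exact ⟨Nat.dvd_gcd h1 h3, Nat.gcd_ne_zero_left h2⟩
      · rintro ⟨h1, _⟩
        exact ⟨⟨h1.trans (Nat.gcd_dvd_left _ _), NeZero.ne k⟩, h1.trans (Nat.gcd_dvd_right _ _)⟩
    rw [← hfilter, Finset.sum_filter]
    refine Finset.sum_congr rfl (fun m _ => ?_)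
    by_cases hmr : m ∣ r
    · rw [if_pos hmr, if_pos hmr, mul_comm]
    · rw [if_neg hmr, if_neg hmr, mul_zero]
  rw [hsum] at hb
  exact hb
end

section
/- For every integer a > 1, Σ_{t=1}^{a-1} (-1)^t τ(a,t) = μ(a), where μ is the Möbius function. -/
open Finset

/-- `τ(a, t)`: the number of `t`-tuples `(a_1, ..., a_t)` of integers with every `a_j ≥ 2`
and `a_1 * a_2 * ⋯ * a_t = a`. (Every such entry is at most `a` when the product is `a`.) -/
def tauCount (a t : ℕ) : ℕ :=
  ((Fintype.piFinset (fun _ : Fin t => Finset.range (a + 1))).filter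
    (fun f => (∀ j, 2 ≤ f j) ∧ ∏ j, f j = a)).card

/-!
`τ(·, t)` is the `t`-th Dirichlet power of the indicator of `n ≥ 2`, which is `ζ - 1`. Hence
`∑_t (-1)^t τ(a, t)` is the value at `a` of the geometric series `∑_t (1 - ζ)^t`, whose sum is
`ζ⁻¹ = μ`. Truncating the series at `t = a` costs nothing, because `τ(n, t) = 0` for `n < 2^t`.
-/

namespace ArithmeticFunction

theorem sum_apply {R ι : Type*} [AddCommMonoid R] (s : Finset ι)
    (f : ι → ArithmeticFunction R) (n : ℕ) : (∑ i ∈ s, f i) n = ∑ i ∈ s, f i n := by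
  induction s using Finset.cons_induction <;> simp [add_apply, *]

theorem sub_apply {R : Type*} [AddGroup R] (f g : ArithmeticFunction R) (n : ℕ) :
    (f - g) n = f n - g n := by
  rw [sub_eq_add_neg, add_apply, neg_apply, sub_eq_add_neg]

end ArithmeticFunction

open ArithmeticFunction
open scoped ArithmeticFunction.zeta ArithmeticFunction.Moebius

lemma tauCount_eq_card_finMulAntidiag (n t : ℕ) :
    tauCount n t = #{f ∈ Nat.finMulAntidiag t n | ∀ j, 2 ≤ f j} := by
  rw [tauCount]
  congr 1
  ext f
  simp only [mem_filter, Fintype.mem_piFinset, mem_range, Nat.mem_finMulAntidiag]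
  constructor
  · rintro ⟨-, h2, rfl⟩
    exact ⟨⟨rfl, prod_ne_zero_iff.mpr fun j _ => (two_pos.trans_le (h2 j)).ne'⟩, h2⟩
  · rintro ⟨⟨rfl, hn⟩, h2⟩
    exact ⟨fun j => Nat.lt_succ_of_le (Nat.le_of_dvd (Nat.pos_of_ne_zero hn)
      (dvd_prod_of_mem _ (mem_univ j))), h2, rfl⟩

lemma tauCount_zero (n : ℕ) : tauCount n 0 = if n = 1 then 1 else 0 := by
  split_ifs with h <;> simp [tauCount, eq_comm, h]

lemma tauCount_succ (n t : ℕ) :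
    tauCount n (t + 1) =
      ∑ x ∈ n.divisorsAntidiagonal, if 2 ≤ x.1 then tauCount x.2 t else 0 := by
  simp_rw [← sum_filter, tauCount_eq_card_finMulAntidiag, ← card_sigma]
  refine card_bij' (fun f _ => ⟨(f 0, ∏ j, Fin.tail f j), Fin.tail f⟩)
    (fun p _ => Fin.cons p.1.1 p.2) ?_ ?_ ?_ ?_
  · intro f hf
    simp only [mem_filter, Nat.mem_finMulAntidiag, mem_sigma, Nat.mem_divisorsAntidiagonal,
      true_and] at hf ⊢
    obtain ⟨⟨hprod, hn⟩, h2⟩ := hf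
    rw [Fin.prod_univ_succ] at hprod
    exact ⟨⟨⟨hprod, hn⟩, h2 0⟩, right_ne_zero_of_mul (hprod ▸ hn), fun j => h2 j.succ⟩
  · rintro ⟨⟨x, y⟩, g⟩ hp
    simp only [mem_filter, Nat.mem_finMulAntidiag, mem_sigma, Nat.mem_divisorsAntidiagonal]
      at hp ⊢
    obtain ⟨⟨⟨rfl, hn⟩, hx⟩, ⟨rfl, -⟩, h2⟩ := hp
    exact ⟨⟨by simp [Fin.prod_univ_succ], hn⟩, Fin.cases hx h2⟩
  · intro f _
    exact Fin.cons_self_tail f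
  · rintro ⟨⟨x, y⟩, g⟩ hp
    simp only [mem_filter, Nat.mem_finMulAntidiag, mem_sigma] at hp
    obtain ⟨-, ⟨rfl, -⟩, -⟩ := hp
    simp

lemma tauCount_eq_zero_of_lt_two_pow {n t : ℕ} (h : n < 2 ^ t) : tauCount n t = 0 := by
  rw [tauCount, Finset.card_eq_zero, filter_eq_empty_iff]
  rintro f - ⟨h2, rfl⟩
  have := pow_card_le_prod univ f 2 fun j _ => h2 j
  rw [card_univ, Fintype.card_fin] at this
  exact absurd this (not_le.mpr h)

lemma one_sub_zeta_apply (n : ℕ) :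
    (1 - ζ : ArithmeticFunction ℤ) n = if 2 ≤ n then -1 else 0 := by
  rw [ArithmeticFunction.sub_apply, one_apply, natCoe_apply, zeta_apply]
  rcases n with _ | _ | n <;> simp

lemma one_sub_zeta_pow_apply (t n : ℕ) :
    ((1 - ζ : ArithmeticFunction ℤ) ^ t) n = (-1) ^ t * tauCount n t := by
  induction t generalizing n with
  | zero => simp [tauCount_zero, one_apply]
  | succ t ih =>
    rw [pow_succ', mul_apply, tauCount_succ, Nat.cast_sum, mul_sum]
    refine sum_congr rfl fun x _ => ?_
    rw [one_sub_zeta_apply, ih]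
    split_ifs <;> simp [pow_succ]

lemma geom_sum_one_sub_zeta (N : ℕ) :
    ∑ t ∈ range N, (1 - ζ : ArithmeticFunction ℤ) ^ t = μ - (1 - ζ) ^ N * μ := by
  have hgeom : (∑ t ∈ range N, (1 - ζ : ArithmeticFunction ℤ) ^ t) * ζ = 1 - (1 - ζ) ^ N := by
    linear_combination -geom_sum_mul (1 - ζ : ArithmeticFunction ℤ) N
  calc ∑ t ∈ range N, (1 - ζ : ArithmeticFunction ℤ) ^ t
      = (∑ t ∈ range N, (1 - ζ : ArithmeticFunction ℤ) ^ t) * ζ * μ := by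
        rw [mul_assoc, coe_zeta_mul_moebius, mul_one]
    _ = μ - (1 - ζ) ^ N * μ := by rw [hgeom]; ring

lemma one_sub_zeta_pow_mul_moebius_apply_self (n : ℕ) :
    ((1 - ζ : ArithmeticFunction ℤ) ^ n * μ) n = 0 := by
  rw [mul_apply]
  refine sum_eq_zero fun x hx => ?_
  have hx : x.1 < 2 ^ n :=
    (Nat.divisor_le (Nat.fst_mem_divisors_of_mem_antidiagonal hx)).trans_lt n.lt_two_pow_self
  rw [one_sub_zeta_pow_apply, tauCount_eq_zero_of_lt_two_pow hx]
  simp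

lemma sum_range_neg_one_pow_mul_tauCount (n : ℕ) :
    ∑ t ∈ range n, (-1 : ℤ) ^ t * tauCount n t = μ n := by
  simp_rw [← one_sub_zeta_pow_apply, ← ArithmeticFunction.sum_apply, geom_sum_one_sub_zeta,
    ArithmeticFunction.sub_apply, one_sub_zeta_pow_mul_moebius_apply_self, sub_zero]

/-- for every integer `a > 1`,
`∑_{t=1}^{a-1} (-1)^t τ(a, t) = μ(a)`. -/
theorem alt_sum_tau (a : ℕ) (ha : 1 < a) :
    ∑ t ∈ Finset.Icc 1 (a - 1), (-1 : ℤ) ^ t * tauCount a t =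
      ArithmeticFunction.moebius a := by
  rw [← sum_range_neg_one_pow_mul_tauCount,
    ← sum_erase (range a) (a := 0) (by simp [tauCount_zero, ha.ne'])]
  congr 1
  ext t
  simp only [mem_Icc, mem_erase, mem_range]
  omega
end

section
/- Let n ≥ 1 and m ≥ 1 be relatively prime integers with m ≤ n. Then for any prime p and any integer α ≥ 1, C(n·p^α, m·p^α) ≡ C(n, m) (mod n·p), where C(·,·) denotes the binomial coefficient. -/
/-- Iterated Lucas: `C(u p^a + r, v p^a + s) ≡ C(u,v) C(r,s) (mod p)` for `r,s < p^a`. -/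
lemma lucas_pow_aux (p : ℕ) (hp : p.Prime) (a : ℕ) :
    ∀ u v r s : ℕ, r < p ^ a → s < p ^ a →
      (u * p ^ a + r).choose (v * p ^ a + s) ≡ u.choose v * r.choose s [MOD p] := by
  haveI : Fact p.Prime := ⟨hp⟩
  induction a with
  | zero =>
    intro u v r s hr hs
    simp only [pow_zero, Nat.lt_one_iff] at hr hs
    subst hr; subst hs
    simp [Nat.ModEq.refl]
  | succ a ih =>
    intro u v r s hr hs
    have hp0 : 0 < p := hp.pos
    have h1 := Choose.choose_modEq_choose_mod_mul_choose_div_nat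
      (p := p) (n := u * p ^ (a + 1) + r) (k := v * p ^ (a + 1) + s)
    have hmodn : (u * p ^ (a + 1) + r) % p = r % p := by
      rw [pow_succ, ← mul_assoc, mul_comm _ p, Nat.mul_add_mod]
    have hmodk : (v * p ^ (a + 1) + s) % p = s % p := by
      rw [pow_succ, ← mul_assoc, mul_comm _ p, Nat.mul_add_mod]
    have hdivn : (u * p ^ (a + 1) + r) / p = u * p ^ a + r / p := by
      rw [pow_succ, ← mul_assoc, mul_comm _ p, Nat.mul_add_div hp0]
    have hdivk : (v * p ^ (a + 1) + s) / p = v * p ^ a + s / p := by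
      rw [pow_succ, ← mul_assoc, mul_comm _ p, Nat.mul_add_div hp0]
    rw [hmodn, hmodk, hdivn, hdivk] at h1
    have hr' : r / p < p ^ a := Nat.div_lt_of_lt_mul (by rwa [mul_comm, ← pow_succ])
    have hs' : s / p < p ^ a := Nat.div_lt_of_lt_mul (by rwa [mul_comm, ← pow_succ])
    have h2 := ih u v (r / p) (s / p) hr' hs'
    have h3 := Choose.choose_modEq_choose_mod_mul_choose_div_nat (p := p) (n := r) (k := s)
    calc (u * p ^ (a + 1) + r).choose (v * p ^ (a + 1) + s)
        ≡ (r % p).choose (s % p) * ((u * p ^ a + r / p).choose (v * p ^ a + s / p)) [MOD p] := h1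
      _ ≡ (r % p).choose (s % p) * (u.choose v * ((r / p).choose (s / p))) [MOD p] :=
          h2.mul_left _
      _ = u.choose v * ((r % p).choose (s % p) * ((r / p).choose (s / p))) := by ring
      _ ≡ u.choose v * r.choose s [MOD p] := (h3.mul_left _).symm

/-- for coprime `n, m` with `1 ≤ m ≤ n`, any prime `p` and `α ≥ 1`,
`C(n p^α, m p^α) ≡ C(n, m) (mod n p)`. -/
theorem choose_pow_congr (n m : ℕ) (hn : 1 ≤ n) (hm : 1 ≤ m) (hmn : m ≤ n)
    (hcop : Nat.gcd n m = 1) (p : ℕ) (hp : p.Prime) (α : ℕ) (hα : 1 ≤ α) :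
    (n * p ^ α).choose (m * p ^ α) ≡ n.choose m [MOD n * p] := by
  set P := p ^ α with hP
  have hP0 : 0 < P := pow_pos hp.pos α
  have hnP1 : 1 ≤ n * P := Nat.mul_pos hn hP0
  have hmP1 : 1 ≤ m * P := Nat.mul_pos hm hP0
  -- key identity at scale 1
  have key1 : n * (n - 1).choose (m - 1) = n.choose m * m := by
    have h := Nat.add_one_mul_choose_eq (n - 1) (m - 1)
    simp only [Nat.succ_eq_add_one, Nat.sub_add_cancel hn, Nat.sub_add_cancel hm] at h
    exact h
  -- key identity at scale P
  have key2 : n * (n * P - 1).choose (m * P - 1) = (n * P).choose (m * P) * m := by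
    have h := Nat.add_one_mul_choose_eq (n * P - 1) (m * P - 1)
    simp only [Nat.succ_eq_add_one, Nat.sub_add_cancel hnP1, Nat.sub_add_cancel hmP1] at h
    apply Nat.eq_of_mul_eq_mul_right hP0
    calc n * (n * P - 1).choose (m * P - 1) * P
        = n * P * (n * P - 1).choose (m * P - 1) := by ring
      _ = (n * P).choose (m * P) * (m * P) := h
      _ = (n * P).choose (m * P) * m * P := by ring
  have hcopnm : Nat.Coprime n m := hcop
  have dvd1 : n ∣ n.choose m :=
    hcopnm.dvd_of_dvd_mul_right ⟨(n - 1).choose (m - 1), key1.symm⟩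
  have dvd2 : n ∣ (n * P).choose (m * P) :=
    hcopnm.dvd_of_dvd_mul_right ⟨(n * P - 1).choose (m * P - 1), key2.symm⟩
  by_cases hpn : p ∣ n
  · -- p ∣ n, hence p ∤ m and m is a unit mod n*p
    have hpm : ¬ p ∣ m := by
      intro h
      have : p ∣ 1 := hcop ▸ Nat.dvd_gcd hpn h
      exact hp.ne_one (Nat.dvd_one.mp this)
    have hcpm : Nat.Coprime p m := hp.coprime_iff_not_dvd.mpr hpm
    have hco : Nat.gcd (n * p) m = 1 := Nat.Coprime.mul hcopnm hcpm
    refine Nat.ModEq.cancel_left_of_coprime hco ?_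
    have e1 : m * (n * P).choose (m * P) = n * (n * P - 1).choose (m * P - 1) := by
      rw [mul_comm]; exact key2.symm
    have e2 : m * n.choose m = n * (n - 1).choose (m - 1) := by
      rw [mul_comm]; exact key1.symm
    rw [e1, e2]
    have hX : (n * P - 1).choose (m * P - 1) ≡ (n - 1).choose (m - 1) [MOD p] := by
      -- reduce to Lucas mod p
      have hlen : P ≤ n * P := Nat.le_mul_of_pos_left P hn
      have hlem : P ≤ m * P := Nat.le_mul_of_pos_left P hm
      have en : n * P - 1 = (n - 1) * P + (P - 1) := by rw [Nat.sub_one_mul]; omega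
      have em : m * P - 1 = (m - 1) * P + (P - 1) := by rw [Nat.sub_one_mul]; omega
      rw [en, em]
      have := lucas_pow_aux p hp α (n - 1) (m - 1) (P - 1) (P - 1)
        (Nat.sub_lt hP0 one_pos) (Nat.sub_lt hP0 one_pos)
      simpa using this
    exact hX.mul_left' n
  · -- p ∤ n: combine congruences mod n and mod p
    have hco : Nat.Coprime n p := (hp.coprime_iff_not_dvd.mpr hpn).symm
    rw [← Nat.modEq_and_modEq_iff_modEq_mul hco]
    constructor
    · exact ((Nat.modEq_zero_iff_dvd).mpr dvd2).trans ((Nat.modEq_zero_iff_dvd).mpr dvd1).symm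
    · have := lucas_pow_aux p hp α n m 0 0 hP0 hP0
      simpa using this
end

section
/- Let n and m be integers with 2 ≤ m ≤ ⌊n/2⌋ and gcd(n,m) > 1. Let u = max{v ∈ ℕ : v ≤ 2m-2 and gcd(v,n) > 1} (this set is nonempty since it contains m). Let s = s_1·s_2 where s_1 and s_2 are positive integers with s_1 < n/u, s_2 ≤ n and gcd(s_2, n) = 1. Then the set B_s = {s, 2s, ..., ms} has exactly m distinct residues modulo n, and the set of these residues belongs to 𝒜_n(m,n), i.e., f_n(B_s modulo n) = n. In particular, {1, 2, ..., m} belongs to 𝒜_n(m,n). -/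
open Finset

/-! In `ZMod n` the residues of `B_s` are those of `P = {s₁, 2s₁, …, ms₁}` multiplied by the
unit `s₂`, so it suffices that `P` has no nonzero period `v`; as `ms₁ < n`, `P` consists of
distinct numbers below `n`. Shifting the first term of `P` back into `P` forces `v = c s₁` with
`0 < c < m`; shifting the last term must then wrap around, forcing `n = w s₁` with
`m < w ≤ 2m - 2`, and the maximality of `u` gives `n = w s₁ ≤ u s₁ < n`. -/

lemma mem_Asub {s j i : ℕ} {A : Finset ℕ} :
    A ∈ Asub s j i ↔ A ⊆ range i ∧ A.card = j ∧ fk i A = s := by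
  simp [Asub, Acoll, and_assoc]

lemma eqMod_iff_image_natCast {k : ℕ} {A B : Finset ℕ} :
    eqMod k A B ↔ A.image (Nat.cast : ℕ → ZMod k) = B.image Nat.cast := by
  have hres (C : Finset ℕ) :
      (resSet k C).image (Nat.cast : ℕ → ZMod k) = C.image Nat.cast := by
    simp only [resSet, image_image, Function.comp_def, ZMod.natCast_mod]
  have hval (C : Finset ℕ) :
      (C.image (Nat.cast : ℕ → ZMod k)).image ZMod.val = resSet k C := by
    simp only [resSet, image_image, Function.comp_def, ZMod.val_natCast]
  constructor
  · intro h
    rw [← hres A, ← hres B, show resSet k A = resSet k B from h]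
  · intro h
    rw [eqMod, ← hval A, ← hval B, h]

lemma image_natCast_shiftSet (k t : ℕ) (A : Finset ℕ) :
    (shiftSet A t).image (Nat.cast : ℕ → ZMod k) =
      (A.image Nat.cast).image (· + (t : ZMod k)) := by
  simp only [shiftSet, image_image, Function.comp_def, Nat.cast_add]

lemma fk_eq_self {k : ℕ} [NeZero k] {A : Finset ℕ}
    (h : ∀ v : ZMod k, (A.image Nat.cast).image (· + v) = A.image Nat.cast → v = 0) :
    fk k A = k := by
  have hk : k ∈ {l | 0 < l ∧ eqMod k (shiftSet A l) A} := by
    refine ⟨NeZero.pos k, ?_⟩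
    rw [eqMod_iff_image_natCast, image_natCast_shiftSet, ZMod.natCast_self]
    simp
  refine le_antisymm (Nat.sInf_le hk) ?_
  obtain ⟨hl, hA⟩ := Nat.sInf_mem ⟨k, hk⟩
  rw [eqMod_iff_image_natCast, image_natCast_shiftSet] at hA
  exact Nat.le_of_dvd hl ((ZMod.natCast_eq_zero_iff _ _).1 (h _ hA))

lemma eq_zero_of_image_mul_add_eq {R : Type*} [Ring R] [DecidableEq R] {S : Finset R} {a : R}
    (ha : IsUnit a) (hS : ∀ v, S.image (· + v) = S → v = 0) {v : R}
    (h : (S.image (· * a)).image (· + v) = S.image (· * a)) : v = 0 := by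
  obtain ⟨u, rfl⟩ := ha
  have h' := congrArg (Finset.image (· * ((u⁻¹ : Rˣ) : R))) h
  simp only [image_image, Function.comp_def, add_mul, mul_assoc, Units.mul_inv, mul_one,
    image_id'] at h'
  exact (Units.mul_left_eq_zero _).1 (hS _ h')

lemma Nat.eq_or_eq_add_of_modEq {n x y : ℕ} (h : x ≡ y [MOD n]) (hy : y < n) (hx : x < 2 * n) :
    x = y ∨ x = y + n := by
  have hmod : x % n = y := (Nat.mod_eq_of_lt hy) ▸ h
  have hdiv : x / n < 2 := Nat.div_lt_of_lt_mul (by omega)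
  have := Nat.div_add_mod x n
  interval_cases hq : x / n <;> omega

lemma eq_zero_of_image_add_eq_progression {n m s : ℕ} (hm : 0 < m) (hms : m * s < n)
    (hw : ∀ w, m < w → w + 2 ≤ 2 * m → w * s ≠ n) {v : ZMod n}
    (hv : ((Icc 1 m).image (fun j => ((j * s : ℕ) : ZMod n))).image (· + v) =
      (Icc 1 m).image (fun j => ((j * s : ℕ) : ZMod n))) : v = 0 := by
  have : NeZero n := ⟨by omega⟩
  have shift : ∀ j ∈ Icc 1 m, ∃ j' ∈ Icc 1 m, j * s + v.val ≡ j' * s [MOD n] := by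
    intro j hj
    have hmem := mem_image_of_mem (· + v) (mem_image_of_mem (fun j => ((j * s : ℕ) : ZMod n)) hj)
    rw [hv] at hmem
    obtain ⟨j', hj', he⟩ := mem_image.1 hmem
    refine ⟨j', hj', ?_⟩
    rw [← ZMod.natCast_eq_natCast_iff, Nat.cast_add, ZMod.natCast_zmod_val]
    exact he.symm
  obtain ⟨j₁, hj₁, h₁⟩ := shift 1 (by simp; omega)
  obtain ⟨j₂, hj₂, h₂⟩ := shift m (by simp; omega)
  rw [mem_Icc] at hj₁ hj₂
  rw [← ZMod.val_eq_zero]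
  set l := v.val
  have hl : l < n := ZMod.val_lt v
  by_contra hl0
  have hj₁s : j₁ * s ≤ m * s := Nat.mul_le_mul_right s hj₁.2
  have hj₂s : j₂ * s ≤ m * s := Nat.mul_le_mul_right s hj₂.2
  have hsj₁ : 1 * s ≤ j₁ * s := Nat.mul_le_mul_right s hj₁.1
  have e₁ : 1 * s + l = j₁ * s := by
    rcases Nat.eq_or_eq_add_of_modEq h₁ (by omega) (by omega) with h | h <;> omega
  have e₂ : m * s + l = j₂ * s + n := by
    rcases Nat.eq_or_eq_add_of_modEq h₂ (by omega) (by omega) with h | h <;> omega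
  obtain ⟨c, rfl⟩ : ∃ c, j₁ = c + 1 := ⟨j₁ - 1, by omega⟩
  obtain ⟨w, hw'⟩ : ∃ w, m + c = j₂ + w := ⟨m + c - j₂, by omega⟩
  have hwn : w * s = n := by
    have := congrArg (· * s) hw'
    simp only [add_mul] at this e₁
    linarith
  have hmw : m < w := Nat.lt_of_mul_lt_mul_right (hwn ▸ hms)
  exact hw w hmw (by omega) hwn

lemma injOn_mul_mul_mod {n s₁ s₂ : ℕ} (hs₁ : 0 < s₁) (hs₂ : Nat.Coprime s₂ n) :
    Set.InjOn (fun l => l * (s₁ * s₂) % n) {l | l * s₁ < n} := by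
  intro x hx y hy h
  have hxy : x * s₁ * s₂ ≡ y * s₁ * s₂ [MOD n] := by
    simpa only [Nat.ModEq, mul_assoc] using h
  have h' := Nat.ModEq.cancel_right_of_coprime (Nat.coprime_comm.1 hs₂) hxy
  rw [Nat.ModEq, Nat.mod_eq_of_lt hx, Nat.mod_eq_of_lt hy] at h'
  exact Nat.eq_of_mul_eq_mul_right hs₁ h'

lemma image_mul_mul_mod_mem_Asub {n m s₁ s₂ : ℕ} (hm : 0 < m) (hs₁ : 0 < s₁)
    (hms : m * s₁ < n) (hs₂ : Nat.Coprime s₂ n)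
    (hw : ∀ w, m < w → w + 2 ≤ 2 * m → w * s₁ ≠ n) :
    ((Icc 1 m).image (fun l => l * (s₁ * s₂) % n)).card = m ∧
      (Icc 1 m).image (fun l => l * (s₁ * s₂) % n) ∈ Asub n m n := by
  have : NeZero n := ⟨by omega⟩
  have hcard : ((Icc 1 m).image (fun l => l * (s₁ * s₂) % n)).card = m := by
    rw [card_image_of_injOn ((injOn_mul_mul_mod hs₁ hs₂).mono fun l hl =>
      (Nat.mul_le_mul_right s₁ (mem_Icc.1 hl).2).trans_lt hms), Nat.card_Icc, Nat.add_sub_cancel]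
  refine ⟨hcard, mem_Asub.2 ⟨fun x hx => ?_, hcard, fk_eq_self fun v hv => ?_⟩⟩
  · obtain ⟨l, -, rfl⟩ := mem_image.1 hx
    exact mem_range.2 (Nat.mod_lt _ (by omega))
  · have hB :
        ((Icc 1 m).image (fun l => l * (s₁ * s₂) % n)).image (Nat.cast : ℕ → ZMod n) =
        ((Icc 1 m).image (fun j => ((j * s₁ : ℕ) : ZMod n))).image (· * (s₂ : ZMod n)) := by
      simp only [image_image, Function.comp_def, ZMod.natCast_mod, Nat.cast_mul, mul_assoc]
    rw [hB] at hv
    exact eq_zero_of_image_mul_add_eq ((ZMod.isUnit_iff_coprime _ _).2 hs₂)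
      (fun v hv => eq_zero_of_image_add_eq_progression hm hms hw hv) hv

theorem Bs_mem_Asub_general (n m u s₁ s₂ : ℕ) (hm2 : 2 ≤ m)
    (hgcd : 1 < Nat.gcd n m)
    (hu3 : ∀ v : ℕ, v ≤ 2 * m - 2 → 1 < Nat.gcd v n → v ≤ u)
    (hs₁ : 0 < s₁) (hs₁u : s₁ * u < n)
    (hs₂g : Nat.gcd s₂ n = 1) :
    (((Finset.Icc 1 m).image (fun l => (l * (s₁ * s₂)) % n)).card = m ∧
      (Finset.Icc 1 m).image (fun l => (l * (s₁ * s₂)) % n) ∈ Asub n m n) ∧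
    Finset.Icc 1 m ∈ Asub n m n := by
  have hmu : m ≤ u := hu3 m (by omega) (by rwa [Nat.gcd_comm])
  have hadmissible :
      ∀ t ≤ s₁, m * t < n ∧ ∀ w, m < w → w + 2 ≤ 2 * m → w * t ≠ n := by
    intro t hts
    have hut : u * t < n := (Nat.mul_le_mul_left u hts).trans_lt (mul_comm s₁ u ▸ hs₁u)
    refine ⟨(Nat.mul_le_mul_right t hmu).trans_lt hut, fun w hmw hw2 hwt => ?_⟩
    have hwu : w ≤ u := hu3 w (by omega) (by rw [Nat.gcd_eq_left ⟨t, hwt.symm⟩]; omega)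
    exact absurd ((Nat.mul_le_mul_right t hwu).trans_lt hut) (by omega)
  obtain ⟨hms₁, hw₁⟩ := hadmissible s₁ le_rfl
  obtain ⟨hm1, hw1⟩ := hadmissible 1 hs₁
  refine ⟨image_mul_mul_mod_mem_Asub (by omega) hs₁ hms₁ hs₂g hw₁, ?_⟩
  have hid : (Icc 1 m).image (fun l => l * (1 * 1) % n) = Icc 1 m := by
    refine (image_congr fun l hl => ?_).trans image_id
    exact (mul_one l).symm ▸ Nat.mod_eq_of_lt (by simp at hl; omega)
  exact hid ▸ (image_mul_mul_mod_mem_Asub (by omega) one_pos hm1 (Nat.coprime_one_left n) hw1).2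

/-- with `2 ≤ m ≤ ⌊n/2⌋`, `gcd(n, m) > 1`,
`u = max {v : v ≤ 2m - 2, gcd(v, n) > 1}`, and `s = s₁ s₂` with `s₁ < n / u`, `s₂ ≤ n`,
`gcd(s₂, n) = 1`: the set `B_s = {s, 2s, ..., ms}` has exactly `m` distinct residues modulo
`n`, and the set of these residues belongs to `𝒜_n(m, n)`; in particular
`{1, 2, ..., m} ∈ 𝒜_n(m, n)`. -/
theorem Bs_mem_Asub (n m u s₁ s₂ : ℕ) (hm2 : 2 ≤ m) (hmn : m ≤ n / 2)
    (hgcd : 1 < Nat.gcd n m)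
    (hu1 : u ≤ 2 * m - 2) (hu2 : 1 < Nat.gcd u n)
    (hu3 : ∀ v : ℕ, v ≤ 2 * m - 2 → 1 < Nat.gcd v n → v ≤ u)
    (hs₁ : 0 < s₁) (hs₂ : 0 < s₂) (hs₁u : s₁ * u < n) (hs₂n : s₂ ≤ n)
    (hs₂g : Nat.gcd s₂ n = 1) :
    (((Finset.Icc 1 m).image (fun l => (l * (s₁ * s₂)) % n)).card = m ∧
      (Finset.Icc 1 m).image (fun l => (l * (s₁ * s₂)) % n) ∈ Asub n m n) ∧
    Finset.Icc 1 m ∈ Asub n m n :=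
  Bs_mem_Asub_general n m u s₁ s₂ hm2 hgcd hu3 hs₁ hs₁u hs₂g
end

section
/- Let k ≥ 2 and 1 ≤ r ≤ k be integers with gcd(k,r) = 1. Then f_k(A) = k for every r-element subset A of {0, 1, ..., k-1}; consequently 𝒜_k(r,k) = 𝒜(r,k) and |𝒜_k(r,k)| = C(k,r), the binomial coefficient k choose r. -/
open Finset

-- key lemma: any valid shift is ≥ k (in fact k ∣ l)
lemma key (k r : ℕ) (hk : 2 ≤ k) (hgcd : Nat.gcd k r = 1)
    (A : Finset ℕ) (hA : A ⊆ Finset.range k) (hcard : A.card = r)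
    (l : ℕ) (hl : 0 < l) (hE : eqMod k (shiftSet A l) A) : k ≤ l := by
  have hk0 : 0 < k := by omega
  have hlt : ∀ a ∈ A, a < k := fun a ha => mem_range.mp (hA ha)
  have h1 : resSet k A = A := by
    unfold resSet
    rw [Finset.image_congr (g := id), Finset.image_id]
    intro a ha
    exact Nat.mod_eq_of_lt (hlt a ha)
  have hstep : A.image (fun a => (a + l) % k) = A := by
    have : resSet k (shiftSet A l) = A.image (fun a => (a + l) % k) := by
      unfold resSet shiftSet
      rw [Finset.image_image]
      rfl
    rw [← this, hE, h1]
  have hmem : ∀ a ∈ A, (a + l) % k ∈ A := by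
    intro a ha
    rw [← hstep]
    exact mem_image_of_mem _ ha
  have hiter : ∀ n, ∀ a ∈ A, (a + n * l) % k ∈ A := by
    intro n
    induction n with
    | zero => intro a ha; simpa [Nat.mod_eq_of_lt (hlt a ha)] using ha
    | succ n ih =>
      intro a ha
      have h2 := hmem _ (ih a ha)
      rw [Nat.mod_add_mod] at h2
      have : a + n * l + l = a + (n+1) * l := by ring
      rwa [this] at h2
  set d := Nat.gcd k l with hd_def
  have hdk : d ∣ k := Nat.gcd_dvd_left k l
  have hd0 : 0 < d := Nat.gcd_pos_of_pos_left l hk0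
  -- find n with n * l ≡ d [MOD k]
  obtain ⟨n, hn⟩ : ∃ n : ℕ, (n * l) % k = d % k := by
    haveI : NeZero k := ⟨by omega⟩
    have hb := Nat.gcd_eq_gcd_ab k l
    set v : ZMod k := (Nat.gcdB k l : ZMod k) with hv
    refine ⟨v.val, ?_⟩
    have : ((v.val * l : ℕ) : ZMod k) = ((d : ℕ) : ZMod k) := by
      push_cast
      rw [ZMod.natCast_val, ZMod.cast_id]
      have : ((d : ℤ) : ZMod k) = ((k : ℤ) * Nat.gcdA k l + (l : ℤ) * Nat.gcdB k l : ℤ) := by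
        exact_mod_cast congrArg (fun x : ℤ => (x : ZMod k)) hb
      push_cast at this
      rw [ZMod.natCast_self] at this
      simp at this
      rw [hv]
      push_cast
      rw [this]
      ring
    exact (ZMod.natCast_eq_natCast_iff' _ _ _).mp this
  have hd_mem : ∀ a ∈ A, (a + d) % k ∈ A := by
    intro a ha
    have : (a + d) % k = (a + n * l) % k := by
      rw [Nat.add_mod, Nat.add_mod a (n*l), hn]
    rw [this]
    exact hiter n a ha
  have hiter2 : ∀ j, ∀ a ∈ A, (a + j * d) % k ∈ A := by
    intro j
    induction j with
    | zero => intro a ha; simpa [Nat.mod_eq_of_lt (hlt a ha)] using ha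
    | succ j ih =>
      intro a ha
      have h2 := hd_mem _ (ih a ha)
      rw [Nat.mod_add_mod] at h2
      have : a + j * d + d = a + (j+1) * d := by ring
      rwa [this] at h2
  set g := k / d with hg_def
  have hkdg : k = d * g := (Nat.mul_div_cancel' hdk).symm
  have hg0 : 0 < g := Nat.div_pos (Nat.le_of_dvd hk0 hdk) hd0
  -- fiber lemma
  have hfiber : ∀ b, (A.filter (fun x => x % d = b)).Nonempty →
      A.filter (fun x => x % d = b) = (range g).image (fun j => b + j * d) := by
    intro b ⟨a, ha⟩
    rw [mem_filter] at ha
    obtain ⟨haA, hab⟩ := ha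
    have hb : b < d := hab ▸ Nat.mod_lt a hd0
    apply Finset.Subset.antisymm
    · intro x hx
      rw [mem_filter] at hx
      obtain ⟨hxA, hxb⟩ := hx
      rw [mem_image]
      refine ⟨x / d, mem_range.mpr ?_, ?_⟩
      · rw [Nat.div_lt_iff_lt_mul hd0]
        calc x < k := hlt x hxA
        _ = g * d := by rw [hkdg, Nat.mul_comm]
      · rw [← hxb, Nat.mod_add_div']
    · intro y hy
      rw [mem_image] at hy
      obtain ⟨j, hj, rfl⟩ := hy
      rw [mem_range] at hj
      rw [mem_filter]
      constructor
      · -- b + j * d ∈ A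
        set i := a / d with hi
        have hai : a = b + i * d := by rw [← hab, Nat.mod_add_div']
        have hig : i < g := by
          rw [hi, Nat.div_lt_iff_lt_mul hd0]
          calc a < k := hlt a haA
          _ = g * d := by rw [hkdg, Nat.mul_comm]
        have hmem2 := hiter2 (g + j - i) a haA
        have heq : a + (g + j - i) * d = b + j * d + k := by
          rw [hai]
          have : i + (g + j - i) = g + j := by omega
          nlinarith [this]
        rw [heq] at hmem2
        have hlt2 : b + j * d < k := by nlinarith
        rwa [Nat.add_mod_right, Nat.mod_eq_of_lt hlt2] at hmem2
      · rw [Nat.add_mul_mod_self_right, Nat.mod_eq_of_lt hb]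
  -- count
  have hsum : A.card = ∑ b ∈ range d, (A.filter (fun x => x % d = b)).card :=
    Finset.card_eq_sum_card_fiberwise (fun x hx => mem_range.mpr (Nat.mod_lt x hd0))
  have hgdvd : ∀ b ∈ range d, g ∣ (A.filter (fun x => x % d = b)).card := by
    intro b _
    rcases Finset.eq_empty_or_nonempty (A.filter (fun x => x % d = b)) with h | h
    · rw [h]; simp
    · rw [hfiber b h, Finset.card_image_of_injective _ ?_, card_range]
      intro x y hxy
      simp only at hxy
      exact Nat.eq_of_mul_eq_mul_right hd0 (Nat.add_left_cancel hxy)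
  have hgr : g ∣ r := by
    rw [← hcard, hsum]
    exact Finset.dvd_sum hgdvd
  have hgk : g ∣ k := ⟨d, by rw [hkdg, Nat.mul_comm]⟩
  have hg1 : g = 1 := Nat.eq_one_of_dvd_coprimes hgcd hgk hgr
  have hdk2 : d = k := by
    have : k = d * 1 := hg1 ▸ hkdg
    omega
  have : k ∣ l := hdk2 ▸ Nat.gcd_dvd_right k l
  exact Nat.le_of_dvd hl this

/-- if `gcd(k, r) = 1` then `f_k(A) = k` for every `r`-element subset `A` of
`{0, ..., k-1}`; consequently `𝒜_k(r, k) = 𝒜(r, k)` and `|𝒜_k(r, k)| = C(k, r)`. -/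
theorem coprime_fk_eq (k r : ℕ) (hk : 2 ≤ k) (hr1 : 1 ≤ r) (hrk : r ≤ k)
    (hgcd : Nat.gcd k r = 1) :
    (∀ A : Finset ℕ, A ⊆ Finset.range k → A.card = r → fk k A = k) ∧
    Asub k r k = Acoll r k ∧ (Asub k r k).card = k.choose r := by
  have part1 : ∀ A : Finset ℕ, A ⊆ Finset.range k → A.card = r → fk k A = k := by
    intro A hA hcard
    have hkmem : k ∈ {l : ℕ | 0 < l ∧ eqMod k (shiftSet A l) A} := by
      refine ⟨by omega, ?_⟩
      unfold eqMod resSet shiftSet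
      rw [Finset.image_image]
      apply Finset.image_congr
      intro a _
      simp [Nat.add_mod_right]
    apply le_antisymm
    · exact Nat.sInf_le hkmem
    · exact le_csInf ⟨k, hkmem⟩ (fun l hl => key k r hk hgcd A hA hcard l hl.1 hl.2)
  have part2 : Asub k r k = Acoll r k := by
    classical
    unfold Asub
    rw [Finset.filter_true_of_mem]
    intro A hA
    unfold Acoll at hA
    rw [Finset.mem_filter, Finset.mem_powerset] at hA
    exact part1 A hA.1 hA.2
  refine ⟨part1, part2, ?_⟩
  rw [part2]
  unfold Acoll
  rw [← Finset.powersetCard_eq_filter, Finset.card_powersetCard, Finset.card_range]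
end
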